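/- arXiv:math/9901047 — 8 statements merged into one kernel-verified Lean document; each statement's English description precedes it below -/
import Mathlib

section
/- An n-vector P on a finite-dimensional real vector space V (with n ≥ 3) satisfies the quadratic identity Σ_{k=1}^{n} [P^{b_1...b_{k-1} u b_{k+1}...b_n} P^{v a_2...a_{n-1} b_k} + P^{b_1...b_{k-1} v b_{k+1}...b_n} P^{u a_2...a_{n-1} b_k}] = 0 for all indices (with respect to a basis) if and only if P is decomposable, i.e., P = V_1 ∧ ... ∧ V_n for some vectors V_1,...,V_n ∈ V. -/
open Function Matrix Equiv Finset

namespace QuadHelper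

variable {m n' : ℕ}

def Skew (m n' : ℕ) (B : (Fin (n' + 3) → Fin m) → ℝ) : Prop :=
  ∀ (i : Fin (n' + 3) → Fin m) (p q : Fin (n' + 3)), p ≠ q →
    B (i ∘ Equiv.swap p q) = - B i

theorem Skew.zero_of_eq {B : (Fin (n' + 3) → Fin m) → ℝ} (hB : Skew m n' B)
    {i : Fin (n' + 3) → Fin m} {p q : Fin (n' + 3)} (hpq : p ≠ q) (h : i p = i q) :
    B i = 0 := by
  have h1 := hB i p q hpq
  have h2 : i ∘ Equiv.swap p q = i := by
    funext c
    rcases eq_or_ne c p with rfl | hcp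
    · simp [h]
    rcases eq_or_ne c q with rfl | hcq
    · simp [h]
    · simp [Equiv.swap_apply_of_ne_of_ne hcp hcq]
  rw [h2] at h1
  linarith

theorem Skew.perm {B : (Fin (n' + 3) → Fin m) → ℝ} (hB : Skew m n' B)
    (σ : Equiv.Perm (Fin (n' + 3))) (i : Fin (n' + 3) → Fin m) :
    B (i ∘ σ) = ((Equiv.Perm.sign σ : ℤ) : ℝ) * B i := by
  revert i
  refine Equiv.Perm.swap_induction_on σ ?_ ?_
  · intro i; simp
  · intro f x y hxy ih i
    have hc : i ∘ (Equiv.swap x y * f) = (i ∘ Equiv.swap x y) ∘ f := by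
      funext c; simp [Equiv.Perm.mul_apply, Function.comp]
    rw [hc, ih, hB i x y hxy, Equiv.Perm.sign_mul, Equiv.Perm.sign_swap hxy]
    push_cast
    ring

theorem Skew.swap2 {B : (Fin (n' + 3) → Fin m) → ℝ} (hB : Skew m n' B)
    {p q : Fin (n' + 3)} (hpq : p ≠ q) (i : Fin (n' + 3) → Fin m) (x y : Fin m) :
    B (update (update i p x) q y) = - B (update (update i p y) q x) := by
  have h1 := hB (update (update i p y) q x) p q hpq
  have h2 : (update (update i p y) q x) ∘ Equiv.swap p q = update (update i p x) q y := by
    funext c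
    simp only [Function.comp_apply]
    rcases eq_or_ne c p with rfl | hcp
    · rw [Equiv.swap_apply_left]
      simp [update_of_ne hpq, update_of_ne hpq.symm]
    rcases eq_or_ne c q with rfl | hcq
    · rw [Equiv.swap_apply_right]
      simp [update_of_ne hpq.symm, update_of_ne hpq]
    · rw [Equiv.swap_apply_of_ne_of_ne hcp hcq]
      simp [update_of_ne hcp, update_of_ne hcq]
  rw [h2] at h1
  exact h1

def QQ (m n' : ℕ) (w : Fin (n' + 3) → Fin m → ℝ) : (Fin (n' + 3) → Fin m) → ℝ :=
  fun i => Matrix.det (Matrix.of fun r c => w r (i c))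

theorem QQ_perm (w : Fin (n' + 3) → Fin m → ℝ) (σ : Equiv.Perm (Fin (n' + 3)))
    (i : Fin (n' + 3) → Fin m) :
    QQ m n' w (i ∘ σ) = ((Equiv.Perm.sign σ : ℤ) : ℝ) * QQ m n' w i := by
  have h : (Matrix.of fun r c => w r ((i ∘ σ) c)) =
      (Matrix.of fun r c => w r (i c)).submatrix id σ := by
    ext r c; simp [Matrix.submatrix_apply]
  rw [QQ, h, Matrix.det_permute' σ]
  simp [QQ]

theorem QQ_skew (w : Fin (n' + 3) → Fin m → ℝ) : Skew m n' (QQ m n' w) := by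
  intro i p q hpq
  rw [QQ_perm w (Equiv.swap p q) i, Equiv.Perm.sign_swap hpq]
  simp

theorem QQ_update (w : Fin (n' + 3) → Fin m → ℝ) (i : Fin (n' + 3) → Fin m)
    (p : Fin (n' + 3)) (j : Fin m) :
    QQ m n' w (update i p j) =
      Matrix.cramer (Matrix.of fun r c => w r (i c)) (fun r => w r j) p := by
  rw [Matrix.cramer_apply, QQ]
  congr 1
  ext r c
  rw [Matrix.updateCol_apply]
  by_cases h : c = p <;> simp [h, Function.update_apply]

theorem QQ_cramer_sum (w : Fin (n' + 3) → Fin m → ℝ) (a b : Fin (n' + 3) → Fin m)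
    (u : Fin m) (p : Fin (n' + 3)) :
    ∑ k, QQ m n' w (update b k u) * QQ m n' w (update a p (b k)) =
      QQ m n' w b * QQ m n' w (update a p u) := by
  set M : Matrix (Fin (n' + 3)) (Fin (n' + 3)) ℝ := Matrix.of fun r c => w r (b c) with hM
  set N : Matrix (Fin (n' + 3)) (Fin (n' + 3)) ℝ := Matrix.of fun r c => w r (a c) with hN
  have h1 : ∀ k, QQ m n' w (update b k u) = Matrix.cramer M (fun r => w r u) k :=
    fun k => QQ_update w b k u
  have h2 : ∀ k, QQ m n' w (update a p (b k)) = Matrix.cramer N (fun r => M r k) p :=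
    fun k => QQ_update w a p (b k)
  calc ∑ k, QQ m n' w (update b k u) * QQ m n' w (update a p (b k))
      = ∑ k, Matrix.cramer N (Matrix.cramer M (fun r => w r u) k • fun r => M r k) p := by
        refine Finset.sum_congr rfl fun k _ => ?_
        rw [h1, h2, _root_.map_smul]
        simp [mul_comm]
    _ = Matrix.cramer N (∑ k, Matrix.cramer M (fun r => w r u) k • fun r => M r k) p := by
        rw [map_sum]
        simp [Finset.sum_apply]
    _ = Matrix.cramer N (M *ᵥ Matrix.cramer M (fun r => w r u)) p := by
        have hv : (∑ k, Matrix.cramer M (fun r => w r u) k • fun r => M r k)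
            = M *ᵥ Matrix.cramer M (fun r => w r u) := by
          funext r
          simp [Matrix.mulVec, dotProduct, Finset.sum_apply, mul_comm]
        rw [hv]
    _ = Matrix.cramer N (M.det • fun r => w r u) p := by rw [Matrix.mulVec_cramer]
    _ = M.det * Matrix.cramer N (fun r => w r u) p := by rw [_root_.map_smul]; simp
    _ = QQ m n' w b * QQ m n' w (update a p u) := by rw [QQ_update]; rfl

theorem QQ_identity (w : Fin (n' + 3) → Fin m → ℝ) (u v : Fin m)
    (a b : Fin (n' + 3) → Fin m) :
    ∑ k : Fin (n' + 3),
      (QQ m n' w (Function.update b k u) *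
          QQ m n' w (Function.update (Function.update a 0 v) (Fin.last (n' + 2)) (b k)) +
        QQ m n' w (Function.update b k v) *
          QQ m n' w (Function.update (Function.update a 0 u) (Fin.last (n' + 2)) (b k))) = 0 := by
  have h0l : (0 : Fin (n' + 3)) ≠ Fin.last (n' + 2) := by
    simp [Fin.ext_iff, Fin.last]
  rw [Finset.sum_add_distrib,
    QQ_cramer_sum w (Function.update a 0 v) b u (Fin.last (n' + 2)),
    QQ_cramer_sum w (Function.update a 0 u) b v (Fin.last (n' + 2))]
  have hswap := (QQ_skew w).swap2 h0l a v u
  rw [hswap]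
  ring

theorem forward (m n' : ℕ) (A : (Fin (n' + 3) → Fin m) → ℝ)
    (hskew : Skew m n' A)
    (hid : ∀ (u v : Fin m) (a b : Fin (n' + 3) → Fin m),
      ∑ k : Fin (n' + 3),
        (A (Function.update b k u) *
            A (Function.update (Function.update a 0 v) (Fin.last (n' + 2)) (b k)) +
          A (Function.update b k v) *
            A (Function.update (Function.update a 0 u) (Fin.last (n' + 2)) (b k))) = 0) :
    ∃ w : Fin (n' + 3) → Fin m → ℝ,
      ∀ i : Fin (n' + 3) → Fin m,
        A i = Matrix.det (Matrix.of fun r c => w r (i c)) := by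
  classical
  by_cases hA0 : ∀ i, A i = 0
  · refine ⟨fun _ _ => 0, fun i => ?_⟩
    have hz : (Matrix.of fun (r c : Fin (n' + 3)) => (0 : ℝ)) =
        (0 : Matrix (Fin (n' + 3)) (Fin (n' + 3)) ℝ) := by
      ext r c; simp
    rw [hA0 i, hz, Matrix.det_zero]
  push_neg at hA0
  obtain ⟨b, hb⟩ := hA0
  set L : Fin (n' + 3) := Fin.last (n' + 2) with hL
  have h0L : (0 : Fin (n' + 3)) ≠ L := by simp [hL, Fin.ext_iff, Fin.last]
  have h1L : (1 : Fin (n' + 3)) ≠ L := by simp [hL, Fin.ext_iff, Fin.last]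
  have h10 : (1 : Fin (n' + 3)) ≠ 0 := by simp [Fin.ext_iff]
  set c : ℝ := A b with hc
  have hcne : c ≠ 0 := hb
  set w : Fin (n' + 3) → Fin m → ℝ := fun r u => A (Function.update b r u) with hw
  set Q : (Fin (n' + 3) → Fin m) → ℝ := QQ m n' w with hQdef
  have hQsk : Skew m n' Q := QQ_skew w
  have hwb : ∀ r j, w r (b j) = if r = j then c else 0 := by
    intro r j
    by_cases h : r = j
    · subst h
      rw [if_pos rfl]
      show A (Function.update b r (b r)) = c
      rw [Function.update_eq_self]
    · simp only [hw, if_neg h]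
      refine hskew.zero_of_eq h ?_
      rw [Function.update_self, Function.update_of_ne (Ne.symm h)]
  have hQb : Q b = c ^ (n' + 3) := by
    have hmat : (Matrix.of fun r c' => w r (b c')) =
        c • (1 : Matrix (Fin (n' + 3)) (Fin (n' + 3)) ℝ) := by
      ext r c'
      simp only [Matrix.of_apply, hwb, Matrix.smul_apply, Matrix.one_apply, smul_eq_mul]
      split <;> simp
    show QQ m n' w b = c ^ (n' + 3)
    rw [QQ, hmat, Matrix.det_smul, Matrix.det_one, Fintype.card_fin, mul_one]
  have hQL2 : ∀ (i : Fin (n' + 3) → Fin m) (z : Fin m),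
      ∑ k, w k z * Q (Function.update i L (b k)) = c * Q (Function.update i L z) := by
    intro i z
    set M : Matrix (Fin (n' + 3)) (Fin (n' + 3)) ℝ := Matrix.of fun r c' => w r (i c') with hM
    have hupd : ∀ k, Q (Function.update i L (b k)) =
        Matrix.cramer M (fun r => w r (b k)) L := fun k => QQ_update w i L (b k)
    have hvec : (∑ k, w k z • fun r => w r (b k)) = c • fun r => w r z := by
      funext r
      simp only [Finset.sum_apply, Pi.smul_apply, smul_eq_mul, hwb]
      rw [Finset.sum_eq_single r]
      · rw [if_pos rfl]; ring
      · intro k _ hk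
        rw [if_neg (Ne.symm hk), mul_zero]
      · intro h; exact absurd (Finset.mem_univ r) h
    calc ∑ k, w k z * Q (Function.update i L (b k))
        = ∑ k, Matrix.cramer M (w k z • fun r => w r (b k)) L := by
          refine Finset.sum_congr rfl fun k _ => ?_
          rw [hupd, _root_.map_smul]
          simp
      _ = Matrix.cramer M (∑ k, w k z • fun r => w r (b k)) L := by
          rw [map_sum]
          simp [Finset.sum_apply]
      _ = Matrix.cramer M (c • fun r => w r z) L := by rw [hvec]
      _ = c * Q (Function.update i L z) := by
          rw [_root_.map_smul]
          simp only [Pi.smul_apply, smul_eq_mul]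
          have h2 := QQ_update w i L z
          rw [← hM] at h2
          rw [hQdef, h2]
  have hE1 : ∀ (i : Fin (n' + 3) → Fin m) (j : Fin (n' + 3)), i 0 = b j →
      c * A i = ∑ k, w k (i L) * A (Function.update i L (b k)) := by
    intro i j h0
    have H := hid (b j) (i L) i b
    have hi0 : Function.update i 0 (b j) = i := by rw [← h0, Function.update_eq_self]
    rw [hi0, Finset.sum_add_distrib] at H
    have hsplit : ∑ k, A (Function.update b k (b j)) *
        A (Function.update (Function.update i 0 (i L)) L (b k))
        = c * A (Function.update (Function.update i 0 (i L)) L (b j)) := by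
      rw [Finset.sum_eq_single j]
      · rw [Function.update_eq_self, ← hc]
      · intro k _ hk
        have hzz : A (Function.update b k (b j)) = 0 :=
          hskew.zero_of_eq hk (by rw [Function.update_self, Function.update_of_ne (Ne.symm hk)])
        rw [hzz, zero_mul]
      · intro h; exact absurd (Finset.mem_univ j) h
    have hswap : A (Function.update (Function.update i 0 (i L)) L (b j)) = - A i := by
      have h1 := hskew.swap2 h0L i (i L) (b j)
      rw [hi0, Function.update_eq_self] at h1
      exact h1
    rw [hsplit, hswap] at H
    have hww : ∑ k, A (Function.update b k (i L)) * A (Function.update i L (b k))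
        = ∑ k, w k (i L) * A (Function.update i L (b k)) := rfl
    rw [hww] at H
    linarith
  -- counting foreign indices
  set Bs : Finset (Fin m) := Finset.image b Finset.univ with hBs
  have hbmem : ∀ k, b k ∈ Bs := fun k => Finset.mem_image_of_mem b (Finset.mem_univ k)
  set t : (Fin (n' + 3) → Fin m) → ℕ :=
    fun i => (Finset.univ.filter fun p => i p ∉ Bs).card with ht
  have htsub : ∀ (i : Fin (n' + 3) → Fin m) (p : Fin (n' + 3)), i p ∈ Bs → t i ≤ n' + 2 := by
    intro i p hp
    have hsub : (Finset.univ.filter fun q => i q ∉ Bs) ⊆ Finset.univ.erase p := by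
      intro q hq
      simp only [Finset.mem_filter] at hq
      refine Finset.mem_erase.mpr ⟨?_, Finset.mem_univ q⟩
      rintro rfl; exact hq.2 hp
    have h1 := Finset.card_le_card hsub
    rw [Finset.card_erase_of_mem (Finset.mem_univ p), Finset.card_univ, Fintype.card_fin] at h1
    simpa [ht] using h1
  have htperm : ∀ (σ : Equiv.Perm (Fin (n' + 3))) (i : Fin (n' + 3) → Fin m),
      t (i ∘ σ) = t i := by
    intro σ i
    refine Finset.card_bij (fun p _ => σ p) ?_ ?_ ?_
    · intro p hp
      rw [Finset.mem_filter] at hp ⊢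
      simp only [Function.comp_apply] at hp
      exact ⟨Finset.mem_univ _, hp.2⟩
    · intro p hp q hq h
      exact σ.injective h
    · intro q hq
      rw [Finset.mem_filter] at hq
      refine ⟨σ.symm q, ?_, by simp⟩
      rw [Finset.mem_filter]
      simp only [Function.comp_apply]
      exact ⟨Finset.mem_univ _, by rw [Equiv.apply_symm_apply]; exact hq.2⟩
  have hbase : ∀ i : Fin (n' + 3) → Fin m, (∀ p, i p ∈ Bs) → c ^ (n' + 2) * A i = Q i := by
    intro i hall
    have hex : ∀ p, ∃ j, b j = i p := by
      intro p
      have := hall p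
      rw [hBs, Finset.mem_image] at this
      obtain ⟨j, _, hj⟩ := this
      exact ⟨j, hj⟩
    choose g hg using hex
    by_cases hginj : Function.Injective g
    · have hgbij : Function.Bijective g := Finite.injective_iff_bijective.mp hginj
      set σ : Equiv.Perm (Fin (n' + 3)) := Equiv.ofBijective g hgbij with hσ
      have hiσ : i = b ∘ ⇑σ := by
        funext p
        exact (hg p).symm
      have hQp : Q (b ∘ ⇑σ) = ((Equiv.Perm.sign σ : ℤ) : ℝ) * Q b := QQ_perm w σ b
      rw [hiσ, hskew.perm σ b, hQp, hQb, ← hc]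
      rcases Int.units_eq_one_or (Equiv.Perm.sign σ) with hs | hs <;>
        rw [hs] <;> push_cast <;> ring
    · obtain ⟨p, q, hgpq, hpq⟩ := Function.not_injective_iff.mp hginj
      have hipq : i p = i q := by rw [← hg p, ← hg q, hgpq]
      rw [hskew.zero_of_eq hpq hipq, hQsk.zero_of_eq hpq hipq, mul_zero]
  have main : ∀ (N : ℕ) (i : Fin (n' + 3) → Fin m), t i ≤ N → c ^ (n' + 2) * A i = Q i := by
    intro N
    induction N with
    | zero =>
      intro i hti
      refine hbase i fun p => ?_
      by_contra hp
      have hmem : p ∈ Finset.univ.filter fun q => i q ∉ Bs :=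
        Finset.mem_filter.mpr ⟨Finset.mem_univ _, hp⟩
      have := Finset.card_pos.mpr ⟨p, hmem⟩
      simp only [ht] at hti
      omega
    | succ N ih =>
      intro i hti
      by_cases hall : ∀ p, i p ∈ Bs
      · exact hbase i hall
      push_neg at hall
      obtain ⟨c0, hc0⟩ := hall
      by_cases hex : ∃ c1, i c1 ∈ Bs
      · -- at least one index from b: rotate and use the exchange relation hE1
        obtain ⟨c1, hc1⟩ := hex
        have hc01 : c0 ≠ c1 := by rintro rfl; exact hc0 hc1
        set σ1 := Equiv.swap (0 : Fin (n' + 3)) c1 with hσ1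
        set d := σ1.symm c0 with hd
        have hd0 : d ≠ 0 := by
          intro h
          apply hc01
          have h2 : σ1 d = c0 := by rw [hd]; exact Equiv.apply_symm_apply σ1 c0
          rw [h] at h2
          rw [← h2, hσ1, Equiv.swap_apply_left]
        set σ := σ1 * Equiv.swap L d with hσdef
        have hσ0 : σ 0 = c1 := by
          rw [hσdef]
          simp only [Equiv.Perm.mul_apply]
          rw [Equiv.swap_apply_of_ne_of_ne h0L (Ne.symm hd0), hσ1, Equiv.swap_apply_left]
        have hσL : σ L = c0 := by
          rw [hσdef]
          simp only [Equiv.Perm.mul_apply]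
          rw [Equiv.swap_apply_left, hd]
          exact Equiv.apply_symm_apply σ1 c0
        have hi'0 : (i ∘ ⇑σ) 0 ∈ Bs := by
          simp only [Function.comp_apply, hσ0]; exact hc1
        rw [hBs, Finset.mem_image] at hi'0
        obtain ⟨j, _, hj⟩ := hi'0
        have hi'L : (i ∘ ⇑σ) L ∉ Bs := by
          simp only [Function.comp_apply, hσL]; exact hc0
        have hti' : t (i ∘ ⇑σ) ≤ N + 1 := by rw [htperm σ i]; exact hti
        have hmemL : L ∈ Finset.univ.filter fun p => (i ∘ ⇑σ) p ∉ Bs :=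
          Finset.mem_filter.mpr ⟨Finset.mem_univ _, hi'L⟩
        have hupdle : ∀ k, t (Function.update (i ∘ ⇑σ) L (b k)) ≤ N := by
          intro k
          have hsub : (Finset.univ.filter fun p => Function.update (i ∘ ⇑σ) L (b k) p ∉ Bs)
              ⊆ (Finset.univ.filter fun p => (i ∘ ⇑σ) p ∉ Bs).erase L := by
            intro q hq
            simp only [Finset.mem_filter] at hq
            have hqL : q ≠ L := by
              rintro rfl
              rw [Function.update_self] at hq
              exact hq.2 (hbmem k)
            rw [Function.update_of_ne hqL] at hq
            exact Finset.mem_erase.mpr ⟨hqL, Finset.mem_filter.mpr ⟨Finset.mem_univ _, hq.2⟩⟩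
          have h1 := Finset.card_le_card hsub
          rw [Finset.card_erase_of_mem hmemL] at h1
          have h2 : 0 < (Finset.univ.filter fun p => (i ∘ ⇑σ) p ∉ Bs).card :=
            Finset.card_pos.mpr ⟨L, hmemL⟩
          simp only [ht] at hti' ⊢
          omega
        have hknown : ∀ k, c ^ (n' + 2) * A (Function.update (i ∘ ⇑σ) L (b k)) =
            Q (Function.update (i ∘ ⇑σ) L (b k)) := fun k => ih _ (hupdle k)
        have hE := hE1 (i ∘ ⇑σ) j hj.symm
        have hmain' : c * (c ^ (n' + 2) * A (i ∘ ⇑σ)) = c * Q (i ∘ ⇑σ) := by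
          calc c * (c ^ (n' + 2) * A (i ∘ ⇑σ)) = c ^ (n' + 2) * (c * A (i ∘ ⇑σ)) := by ring
            _ = c ^ (n' + 2) * ∑ k, w k ((i ∘ ⇑σ) L) *
                A (Function.update (i ∘ ⇑σ) L (b k)) := by rw [hE]
            _ = ∑ k, w k ((i ∘ ⇑σ) L) *
                (c ^ (n' + 2) * A (Function.update (i ∘ ⇑σ) L (b k))) := by
                rw [Finset.mul_sum]
                exact Finset.sum_congr rfl fun k _ => by ring
            _ = ∑ k, w k ((i ∘ ⇑σ) L) * Q (Function.update (i ∘ ⇑σ) L (b k)) :=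
                Finset.sum_congr rfl fun k _ => by rw [hknown]
            _ = c * Q (Function.update (i ∘ ⇑σ) L ((i ∘ ⇑σ) L)) := hQL2 (i ∘ ⇑σ) ((i ∘ ⇑σ) L)
            _ = c * Q (i ∘ ⇑σ) := by rw [Function.update_eq_self]
        have hstep : c ^ (n' + 2) * A (i ∘ ⇑σ) = Q (i ∘ ⇑σ) := mul_left_cancel₀ hcne hmain'
        have hQp : Q (i ∘ ⇑σ) = ((Equiv.Perm.sign σ : ℤ) : ℝ) * Q i := QQ_perm w σ i
        rw [hskew.perm σ i, hQp] at hstep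
        rcases Int.units_eq_one_or (Equiv.Perm.sign σ) with hs | hs <;>
          rw [hs] at hstep <;> push_cast at hstep <;> linarith
      · -- every index is foreign: the special instance plus subtraction trick
        push_neg at hex
        have htiN : n' + 2 ≤ N := by
          have hfe : (Finset.univ.filter fun p => i p ∉ Bs) = Finset.univ :=
            Finset.filter_eq_self.mpr fun p _ => hex p
          have : t i = n' + 3 := by
            simp only [ht, hfe, Finset.card_univ, Fintype.card_fin]
          omega
        have hkn : ∀ (jj : Fin (n' + 3) → Fin m) (p : Fin (n' + 3)), jj p ∈ Bs →
            c ^ (n' + 2) * A jj = Q jj := fun jj p hp =>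
          ih jj (le_trans (htsub jj p hp) htiN)
        set b' : Fin (n' + 3) → Fin m := Function.update i L (b L) with hb'
        have hA2 := hid (i L) (b 0) b b'
        have hQA := QQ_identity w (i L) (b 0) b b'
        rw [Function.update_eq_self] at hA2
        rw [← hL, Function.update_eq_self] at hQA
        have hb'L : b' L = b L := Function.update_self L (b L) i
        have hfi : Function.update b' L (i L) = i := by
          rw [hb', Function.update_idem, Function.update_eq_self]
        have hgb : Function.update b L (b' L) = b := by
          rw [hb'L, Function.update_eq_self]
        set C := c ^ (n' + 2) with hC
        have hk2 : ∀ k, C * A (Function.update b L (b' k)) =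
            Q (Function.update b L (b' k)) := fun k =>
          hkn _ 0 (by rw [Function.update_of_ne h0L]; exact hbmem 0)
        have hk3 : ∀ k, C * A (Function.update b' k (b 0)) =
            Q (Function.update b' k (b 0)) := fun k =>
          hkn _ k (by rw [Function.update_self]; exact hbmem 0)
        have hk4 : ∀ k, C * A (Function.update (Function.update b 0 (i L)) L (b' k)) =
            Q (Function.update (Function.update b 0 (i L)) L (b' k)) := fun k =>
          hkn _ 1 (by rw [Function.update_of_ne h1L, Function.update_of_ne h10]; exact hbmem 1)
        have hk1 : ∀ k, k ≠ L → C * A (Function.update b' k (i L)) =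
            Q (Function.update b' k (i L)) := fun k hkL =>
          hkn _ L (by rw [Function.update_of_ne (Ne.symm hkL), hb'L]; exact hbmem L)
        have hmul : ∑ k, (C * A (Function.update b' k (i L)) *
              (C * A (Function.update b L (b' k))) +
            C * A (Function.update b' k (b 0)) *
              (C * A (Function.update (Function.update b 0 (i L)) L (b' k)))) = 0 := by
          have hexp : ∑ k, (C * A (Function.update b' k (i L)) *
                (C * A (Function.update b L (b' k))) +
              C * A (Function.update b' k (b 0)) *
                (C * A (Function.update (Function.update b 0 (i L)) L (b' k))))
              = C * C * ∑ k, (A (Function.update b' k (i L)) *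
                  A (Function.update b L (b' k)) +
                A (Function.update b' k (b 0)) *
                  A (Function.update (Function.update b 0 (i L)) L (b' k))) := by
            rw [Finset.mul_sum]
            exact Finset.sum_congr rfl fun k _ => by ring
          rw [hexp, hA2, mul_zero]
        have hdiff : ∑ k, (C * A (Function.update b' k (i L)) *
              (C * A (Function.update b L (b' k))) +
            C * A (Function.update b' k (b 0)) *
              (C * A (Function.update (Function.update b 0 (i L)) L (b' k)))
            - (Q (Function.update b' k (i L)) * Q (Function.update b L (b' k)) +
              Q (Function.update b' k (b 0)) *
                Q (Function.update (Function.update b 0 (i L)) L (b' k)))) = 0 := by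
          rw [Finset.sum_sub_distrib, hmul, hQA, sub_zero]
        have hsingle : ∑ k, (C * A (Function.update b' k (i L)) *
              (C * A (Function.update b L (b' k))) +
            C * A (Function.update b' k (b 0)) *
              (C * A (Function.update (Function.update b 0 (i L)) L (b' k)))
            - (Q (Function.update b' k (i L)) * Q (Function.update b L (b' k)) +
              Q (Function.update b' k (b 0)) *
                Q (Function.update (Function.update b 0 (i L)) L (b' k))))
            = C * A (Function.update b' L (i L)) * (C * A (Function.update b L (b' L))) +
              C * A (Function.update b' L (b 0)) *
                (C * A (Function.update (Function.update b 0 (i L)) L (b' L)))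
              - (Q (Function.update b' L (i L)) * Q (Function.update b L (b' L)) +
                Q (Function.update b' L (b 0)) *
                  Q (Function.update (Function.update b 0 (i L)) L (b' L))) := by
          refine Finset.sum_eq_single_of_mem L (Finset.mem_univ L) ?_
          intro k _ hkL
          rw [hk1 k hkL, hk2 k, hk3 k, hk4 k]
          ring
        rw [hsingle, hfi, hgb, hQb] at hdiff
        have hx := hk3 L
        have hy := hk4 L
        have hCb : C * A b = c ^ (n' + 3) := by rw [hC, ← hc]; ring
        rw [hCb] at hdiff
        have hgoal : c ^ (n' + 3) * (C * A i) = c ^ (n' + 3) * Q i := by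
          linear_combination hdiff -
            (C * A (Function.update (Function.update b 0 (i L)) L (b' L))) * hx -
            Q (Function.update b' L (b 0)) * hy
        exact mul_left_cancel₀ (pow_ne_zero _ hcne) hgoal
  have hfin : ∀ i, c ^ (n' + 2) * A i = Q i := by
    intro i
    refine main (n' + 3) i ?_
    have h1 : t i ≤ (Finset.univ : Finset (Fin (n' + 3))).card := Finset.card_filter_le _ _
    rwa [Finset.card_univ, Fintype.card_fin] at h1
  refine ⟨fun r => if r = 0 then fun u => (c ^ (n' + 2))⁻¹ * w r u else w r, ?_⟩
  intro i
  set M : Matrix (Fin (n' + 3)) (Fin (n' + 3)) ℝ := Matrix.of fun r c' => w r (i c') with hM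
  have hmat : (Matrix.of fun r c' =>
      (if r = (0 : Fin (n' + 3)) then fun u => (c ^ (n' + 2))⁻¹ * w r u else w r) (i c'))
      = M.updateRow 0 ((c ^ (n' + 2))⁻¹ • fun c' => w 0 (i c')) := by
    ext r c'
    rw [Matrix.updateRow_apply]
    by_cases h : r = 0 <;> simp [h, hM]
  rw [hmat, Matrix.det_updateRow_smul]
  have hrow : M.updateRow 0 (fun c' => w 0 (i c')) = M := by
    have h0 : (fun c' => w 0 (i c')) = M 0 := rfl
    rw [h0, Matrix.updateRow_eq_self]
  rw [hrow]
  have hQi : M.det = c ^ (n' + 2) * A i := (hfin i).symm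
  rw [hQi]
  field_simp

end QuadHelper

/-- An `n`-vector (here of order `n = m' + 3 ≥ 3`) on a finite-dimensional
real vector space, given by its totally antisymmetric components `A` with respect to a
basis indexed by `Fin m`, satisfies the quadratic identity
`Σ_k [P^{b₁…u…b_n} P^{v a₂…a_{n-1} b_k} + P^{b₁…v…b_n} P^{u a₂…a_{n-1} b_k}] = 0`
(for all choices of indices) iff it is decomposable, i.e. its components are the
components `det(v_r^{i_c})` of a wedge product `V₁ ∧ … ∧ V_n`. The middle indices
`a₂,…,a_{n-1}` are encoded by overwriting the first and last entries of an arbitrary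
index tuple `a`. -/
theorem quadratic_identity_iff_decomposable
    (m n' : ℕ) (A : (Fin (n' + 3) → Fin m) → ℝ)
    (hskew : ∀ (i : Fin (n' + 3) → Fin m) (p q : Fin (n' + 3)), p ≠ q →
      A (i ∘ Equiv.swap p q) = - A i) :
    (∀ (u v : Fin m) (a b : Fin (n' + 3) → Fin m),
      ∑ k : Fin (n' + 3),
        (A (Function.update b k u) *
            A (Function.update (Function.update a 0 v) (Fin.last (n' + 2)) (b k)) +
          A (Function.update b k v) *
            A (Function.update (Function.update a 0 u) (Fin.last (n' + 2)) (b k))) = 0)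
    ↔ ∃ w : Fin (n' + 3) → Fin m → ℝ,
        ∀ i : Fin (n' + 3) → Fin m,
          A i = Matrix.det (Matrix.of fun r c => w r (i c)) := by
  constructor
  · intro hid
    exact QuadHelper.forward m n' A hskew hid
  · rintro ⟨w, hw⟩ u v a b
    simp only [hw]
    exact QuadHelper.QQ_identity w u v a b
end

section
/- For any smooth nowhere-vanishing function φ on an open subset of R^n, the bracket {f_1,...,f_n} = (1/φ) ∂(f_1,...,f_n)/∂(x^1,...,x^n) is a Nambu-Poisson bracket of order n. -/
open Matrix Function

/-- The bracket `{f₁,…,fₙ} = (1/φ) ∂(f₁,…,fₙ)/∂(x¹,…,xⁿ)` on `ℝⁿ`. -/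
noncomputable def brPhi (n : ℕ) (φ : (Fin n → ℝ) → ℝ) (f : Fin n → (Fin n → ℝ) → ℝ)
    (x : Fin n → ℝ) : ℝ :=
  (φ x)⁻¹ *
    Matrix.det (Matrix.of fun r c : Fin n => fderiv ℝ (f r) x (Pi.single c (1 : ℝ)))

namespace NambuAux

variable {n : ℕ}

lemma det_bound (m : Fin n → Fin n → ℝ) :
    ‖Matrix.det (Matrix.of m)‖ ≤ (n.factorial : ℝ) * ∏ i, ‖m i‖ := by
  rw [Matrix.det_apply]
  refine (norm_sum_le _ _).trans ?_
  have h : ∀ σ : Equiv.Perm (Fin n),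
      ‖(Equiv.Perm.sign σ : ℤ) • ∏ i, Matrix.of m (σ i) i‖ ≤ ∏ i, ‖m i‖ := by
    intro σ
    have hs : ‖(Equiv.Perm.sign σ : ℤ) • ∏ i, Matrix.of m (σ i) i‖
        = ‖∏ i, Matrix.of m (σ i) i‖ := by
      rcases Int.units_eq_one_or (Equiv.Perm.sign σ) with h | h <;>
        rw [h] <;> simp
    rw [hs]
    calc ‖∏ i, Matrix.of m (σ i) i‖ ≤ ∏ i, ‖m (σ i)‖ := by
          rw [norm_prod]
          exact Finset.prod_le_prod (fun i _ => norm_nonneg _)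
            (fun i _ => norm_le_pi_norm (m (σ i)) i)
      _ = ∏ i, ‖m i‖ := Equiv.prod_comp σ (fun i => ‖m i‖)
  calc ∑ σ : Equiv.Perm (Fin n), ‖(Equiv.Perm.sign σ : ℤ) • ∏ i, Matrix.of m (σ i) i‖
      ≤ ∑ _σ : Equiv.Perm (Fin n), ∏ i, ‖m i‖ := Finset.sum_le_sum fun σ _ => h σ
    _ = (n.factorial : ℝ) * ∏ i, ‖m i‖ := by
        simp [Finset.card_univ, Fintype.card_perm, mul_comm]

/-- The determinant, as a continuous multilinear map in the rows. -/
noncomputable def detCM (n : ℕ) :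
    ContinuousMultilinearMap ℝ (fun _ : Fin n => (Fin n → ℝ)) ℝ :=
  MultilinearMap.mkContinuous
    ((Matrix.detRowAlternating : (Fin n → ℝ) [⋀^Fin n]→ₗ[ℝ] ℝ)).toMultilinearMap
    (n.factorial : ℝ) (fun m => det_bound m)

lemma detCM_apply (m : Fin n → Fin n → ℝ) : detCM n m = Matrix.det (Matrix.of m) := rfl

lemma detCM_update_det (m : Fin n → Fin n → ℝ) (i : Fin n) (v : Fin n → ℝ) :
    detCM n (Function.update m i v) = ((Matrix.of m).updateRow i v).det := rfl

/-- The row of partial derivatives (the gradient) of `f` at `y`. -/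
noncomputable def rowD (f : (Fin n → ℝ) → ℝ) (y : Fin n → ℝ) : Fin n → ℝ :=
  fun c => fderiv ℝ f y (Pi.single c 1)

/-- The second derivative of `f` at `x`, as a map `v ↦ (c ↦ f''(v, e_c))`. -/
noncomputable def sndD (f : (Fin n → ℝ) → ℝ) (x : Fin n → ℝ) :
    (Fin n → ℝ) →L[ℝ] (Fin n → ℝ) :=
  ContinuousLinearMap.pi fun c =>
    (ContinuousLinearMap.apply ℝ ℝ (Pi.single c (1 : ℝ))).comp (fderiv ℝ (fderiv ℝ f) x)

lemma sndD_apply (f : (Fin n → ℝ) → ℝ) (x v : Fin n → ℝ) (c : Fin n) :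
    sndD f x v c = fderiv ℝ (fderiv ℝ f) x v (Pi.single c 1) := rfl

lemma sndD_symm {f : (Fin n → ℝ) → ℝ} {x : Fin n → ℝ} (hf : ContDiffAt ℝ 2 f x)
    (c j : Fin n) :
    sndD f x (Pi.single c 1) j = sndD f x (Pi.single j 1) c :=
  (hf.isSymmSndFDerivAt (by simp [minSmoothness_of_isRCLikeNormedField])).eq _ _

lemma hasFDerivAt_rowD {f : (Fin n → ℝ) → ℝ} {x : Fin n → ℝ} (hf : ContDiffAt ℝ 2 f x) :
    HasFDerivAt (rowD f) (sndD f x) x := by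
  have h1 : DifferentiableAt ℝ (fderiv ℝ f) x :=
    (hf.fderiv_right (m := 1) (by norm_num)).differentiableAt one_ne_zero
  apply hasFDerivAt_pi''
  intro c
  rw [sndD, ContinuousLinearMap.proj_pi]
  exact ((ContinuousLinearMap.apply ℝ ℝ (Pi.single c (1 : ℝ))).hasFDerivAt).comp x
    h1.hasFDerivAt

/-- Master lemma: derivative of the Jacobian determinant. -/
lemma exists_hasFDerivAt_detRows (f : Fin n → (Fin n → ℝ) → ℝ) (x : Fin n → ℝ)
    (hf : ∀ r, ContDiffAt ℝ 2 (f r) x) :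
    ∃ L : (Fin n → ℝ) →L[ℝ] ℝ,
      HasFDerivAt (fun y => detCM n (fun r => rowD (f r) y)) L x ∧
      ∀ v, L v = ∑ k, detCM n (Function.update (fun r => rowD (f r) x) k (sndD (f k) x v)) := by
  refine ⟨_, HasFDerivAt.multilinear_comp (detCM n) (fun r => hasFDerivAt_rowD (hf r)),
    fun v => ?_⟩
  simp [ContinuousMultilinearMap.toContinuousLinearMap]

lemma vec_expand (v : Fin n → ℝ) : v = ∑ c, v c • (Pi.single c 1 : Fin n → ℝ) := by
  funext j
  simp [Pi.single_apply, Finset.sum_apply]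

lemma detCM_update_sum {α : Type*} (m : Fin n → Fin n → ℝ) (i : Fin n) (s : Finset α)
    (v : α → (Fin n → ℝ)) :
    detCM n (Function.update m i (∑ a ∈ s, v a)) = ∑ a ∈ s, detCM n (Function.update m i (v a)) := by
  classical
  induction s using Finset.induction_on with
  | empty => simp [(detCM n).map_coord_zero i (Function.update_self i 0 m)]
  | insert _ _ hns ih =>
      rw [Finset.sum_insert hns, Finset.sum_insert hns, (detCM n).map_update_add, ih]

lemma detCM_update_expand (m : Fin n → Fin n → ℝ) (i : Fin n) (v : Fin n → ℝ) :
    detCM n (Function.update m i v) = ∑ c, v c * detCM n (Function.update m i (Pi.single c 1)) := by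
  conv_lhs => rw [vec_expand v]
  rw [detCM_update_sum]
  exact Finset.sum_congr rfl fun c _ => by rw [(detCM n).map_update_smul, smul_eq_mul]

lemma rows_update (f : Fin n → (Fin n → ℝ) → ℝ) (i : Fin n) (G : (Fin n → ℝ) → ℝ)
    (y : Fin n → ℝ) :
    (fun r => rowD (Function.update f i G r) y)
      = Function.update (fun r => rowD (f r) y) i (rowD G y) := by
  funext r
  rcases eq_or_ne r i with rfl | hr
  · simp
  · simp [Function.update_of_ne hr]

lemma brPhi_eq (φ : (Fin n → ℝ) → ℝ) (f : Fin n → (Fin n → ℝ) → ℝ) (x : Fin n → ℝ) :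
    brPhi n φ f x = (φ x)⁻¹ * detCM n (fun r => rowD (f r) x) := rfl

lemma brPhi_update (φ : (Fin n → ℝ) → ℝ) (f : Fin n → (Fin n → ℝ) → ℝ) (i : Fin n)
    (G : (Fin n → ℝ) → ℝ) (y : Fin n → ℝ) :
    brPhi n φ (Function.update f i G) y
      = (φ y)⁻¹ * detCM n (Function.update (fun r => rowD (f r) y) i (rowD G y)) := by
  rw [brPhi_eq, rows_update]

lemma rowD_proj (c : Fin n) (y : Fin n → ℝ) :
    rowD (fun z => z c) y = Pi.single c 1 := by
  funext j
  have h : fderiv ℝ (fun z : Fin n → ℝ => z c) y = ContinuousLinearMap.proj c :=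
    (hasFDerivAt_apply c y).fderiv
  rw [rowD, h]
  simp [Pi.single_apply, eq_comm]


lemma detCM_update_single (m : Fin n → Fin n → ℝ) (k j : Fin n) :
    detCM n (Function.update m k (Pi.single j 1)) = (Matrix.of m).adjugate j k := by
  rw [detCM_update_det, Matrix.adjugate_apply]

lemma detCM_swap {e k : Fin n} (hek : e ≠ k) (m : Fin n → Fin n → ℝ) :
    detCM n (fun r => m (Equiv.swap e k r)) = - detCM n m := by
  rw [detCM_apply, detCM_apply]
  have h : (Matrix.of (fun r => m (Equiv.swap e k r)))
      = (Matrix.of m).submatrix (Equiv.swap e k) id := rfl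
  rw [h, Matrix.det_permute]
  simp [Equiv.Perm.sign_swap hek]

section FI

variable (φ : (Fin n → ℝ) → ℝ) (f : Fin n → (Fin n → ℝ) → ℝ) (e : Fin n)

/-- The `c`-th cofactor field determined by `f₁,…` (omitting slot `e`). -/
noncomputable def CC (c : Fin n) (y : Fin n → ℝ) : ℝ :=
  detCM n (Function.update (fun r => rowD (f r) y) e (Pi.single c 1))

/-- The components of the Nambu-Hamiltonian vector field, `(1/φ)` times cofactors. -/
noncomputable def WW (c : Fin n) (y : Fin n → ℝ) : ℝ := (φ y)⁻¹ * CC f e c y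

lemma expand (h : (Fin n → ℝ) → ℝ) (y : Fin n → ℝ) :
    brPhi n φ (Function.update f e h) y = ∑ c, WW φ f e c y * rowD h y c := by
  rw [brPhi_update, detCM_update_expand, Finset.mul_sum]
  exact Finset.sum_congr rfl fun c _ => by rw [WW, CC]; ring

lemma CC_eq (c : Fin n) (y : Fin n → ℝ) :
    CC f e c y = detCM n (fun r => rowD (Function.update f e (fun z => z c) r) y) := by
  rw [rows_update, rowD_proj, CC]

lemma final_algebra (q S l b : Fin n → ℝ) (d p : ℝ) (hl : ∑ c, l c = 0) :
    ∑ c, p * q c * (p * S c + d * b c)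
      = p * (d * ∑ c, (p * l c + q c * b c) + ∑ c, p * q c * S c) := by
  have h1 : ∑ c, (p * l c + q c * b c) = ∑ c, q c * b c := by
    rw [Finset.sum_add_distrib, ← Finset.mul_sum, hl, mul_zero, zero_add]
  rw [h1]
  calc ∑ c, p * q c * (p * S c + d * b c)
      = ∑ c, (p * (p * q c * S c) + p * d * (q c * b c)) :=
        Finset.sum_congr rfl fun c _ => by ring
    _ = p * ∑ c, p * q c * S c + p * d * ∑ c, q c * b c := by
        rw [Finset.sum_add_distrib, Finset.mul_sum, Finset.mul_sum]
    _ = p * (d * ∑ c, q c * b c + ∑ c, p * q c * S c) := by ring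

lemma fund_identity (U : Set (Fin n → ℝ)) (hU : IsOpen U)
    (hφ : ContDiffOn ℝ (⊤ : ℕ∞) φ U) (hφ0 : ∀ x ∈ U, φ x ≠ 0)
    (g : Fin n → (Fin n → ℝ) → ℝ)
    (hf : ∀ i, ContDiffOn ℝ (⊤ : ℕ∞) (f i) U) (hg : ∀ i, ContDiffOn ℝ (⊤ : ℕ∞) (g i) U)
    (x : Fin n → ℝ) (hx : x ∈ U) :
    brPhi n φ (Function.update f e (brPhi n φ g)) x =
      ∑ k : Fin n, brPhi n φ (Function.update g k
        (brPhi n φ (Function.update f e (g k)))) x := by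
  classical
  have hmem := hU.mem_nhds hx
  have hF : ∀ r, ContDiffAt ℝ 2 (f r) x := fun r => ((hf r).contDiffAt hmem).of_le (by exact WithTop.coe_le_coe.2 le_top)
  have hG : ∀ r, ContDiffAt ℝ 2 (g r) x := fun r => ((hg r).contDiffAt hmem).of_le (by exact WithTop.coe_le_coe.2 le_top)
  have hφx : φ x ≠ 0 := hφ0 x hx
  have hφd : DifferentiableAt ℝ φ x :=
    ((hφ.contDiffAt hmem).of_le (by exact WithTop.coe_le_coe.2 le_top)).differentiableAt two_ne_zero
  have hψ : DifferentiableAt ℝ (fun y => (φ y)⁻¹) x := hφd.inv hφx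
  -- the coordinate-substituted families are C²
  have hFc : ∀ c : Fin n, ∀ r, ContDiffAt ℝ 2 (Function.update f e (fun z => z c) r) x := by
    intro c r
    rcases eq_or_ne r e with rfl | hr
    · rw [Function.update_self]
      exact (contDiff_apply (𝕜 := ℝ) (E := ℝ) c).contDiffAt
    · rw [Function.update_of_ne hr]; exact hF r
  -- the derivative of each cofactor field at x
  have hCder : ∀ c : Fin n, ∃ L : (Fin n → ℝ) →L[ℝ] ℝ,
      HasFDerivAt (CC f e c) L x ∧
      ∀ v, L v = ∑ k, detCM n (Function.update
        (Function.update (fun r => rowD (f r) x) e (Pi.single c 1)) k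
        (sndD (Function.update f e (fun z => z c) k) x v)) := by
    intro c
    obtain ⟨L, hL, hLv⟩ := exists_hasFDerivAt_detRows _ x (hFc c)
    refine ⟨L, ?_, fun v => ?_⟩
    · have h1 : CC f e c
          = fun y => detCM n (fun r => rowD (Function.update f e (fun z => z c) r) y) :=
        funext fun y => CC_eq f e c y
      rw [h1]; exact hL
    · rw [hLv v]
      congr 1
      funext k
      rw [rows_update, rowD_proj]
  choose Lc hLc hLcv using hCder
  -- the derivative of the Jacobian of g at x
  obtain ⟨Lg, hLg, hLgv⟩ := exists_hasFDerivAt_detRows g x hG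
  -- notation
  set ψ' := fderiv ℝ (fun y => (φ y)⁻¹) x with hψ'def
  set M : Fin n → Fin n → ℝ := fun r => rowD (g r) x with hMdef
  -- derivative of W c
  have hWc : ∀ c, HasFDerivAt (WW φ f e c)
      ((φ x)⁻¹ • Lc c + CC f e c x • ψ') x := by
    intro c
    exact hψ.hasFDerivAt.mul (hLc c)
  -- derivative of brPhi g
  have hBg : HasFDerivAt (brPhi n φ g) ((φ x)⁻¹ • Lg + detCM n M • ψ') x := by
    have h1 : brPhi n φ g = fun y => (fun y' => (φ y')⁻¹) y *
        (fun y' => detCM n (fun r => rowD (g r) y')) y := funext fun y => brPhi_eq φ g y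
    rw [h1]
    exact hψ.hasFDerivAt.mul hLg
  -- derivative of X k := brPhi n φ (update f e (g k))
  have hXk : ∀ k, HasFDerivAt (brPhi n φ (Function.update f e (g k)))
      (∑ c, (WW φ f e c x • ((ContinuousLinearMap.proj c).comp (sndD (g k) x))
        + rowD (g k) x c • ((φ x)⁻¹ • Lc c + CC f e c x • ψ'))) x := by
    intro k
    have h1 : brPhi n φ (Function.update f e (g k))
        = fun y => ∑ c, WW φ f e c y * rowD (g k) y c := funext fun y => expand φ f e (g k) y
    rw [h1]
    exact HasFDerivAt.fun_sum fun c _ =>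
      (hWc c).mul (hasFDerivAt_pi'.1 (hasFDerivAt_rowD (hG k)) c)
  -- the row of the Hamiltonian bracket X k at x, split into two parts
  have hrowX : ∀ k, rowD (brPhi n φ (Function.update f e (g k))) x
      = (fun j => ∑ c, M k c * ((φ x)⁻¹ * Lc c (Pi.single j 1)
            + CC f e c x * ψ' (Pi.single j 1)))
        + (fun j => ∑ c, WW φ f e c x * sndD (g k) x (Pi.single c 1) j) := by
    intro k
    funext j
    have h0 : rowD (brPhi n φ (Function.update f e (g k))) x j
        = fderiv ℝ (brPhi n φ (Function.update f e (g k))) x (Pi.single j 1) := rfl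
    rw [h0, (hXk k).fderiv]
    simp only [ContinuousLinearMap.coe_sum', Finset.sum_apply,
      ContinuousLinearMap.add_apply, ContinuousLinearMap.coe_smul', Pi.smul_apply,
      ContinuousLinearMap.coe_comp', Function.comp_apply, ContinuousLinearMap.proj_apply,
      Pi.add_apply, smul_eq_mul]
    rw [Finset.sum_add_distrib, add_comm]
    congr 1
    refine Finset.sum_congr rfl fun c _ => ?_
    rw [sndD_symm (hG k) j c]
  -- compute the LHS
  have hLHS : brPhi n φ (Function.update f e (brPhi n φ g)) x
      = ∑ c, WW φ f e c x * ((φ x)⁻¹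
            * ∑ k, detCM n (Function.update M k (sndD (g k) x (Pi.single c 1)))
          + detCM n M * ψ' (Pi.single c 1)) := by
    rw [expand]
    refine Finset.sum_congr rfl fun c _ => ?_
    congr 1
    have h0 : rowD (brPhi n φ g) x c = fderiv ℝ (brPhi n φ g) x (Pi.single c 1) := rfl
    rw [h0, hBg.fderiv, ← hLgv]
    simp [smul_eq_mul]
  -- Piola identity : ∑ c, Lc c (Pi.single c 1) = 0
  have hsnd0 : ∀ c : Fin n, ∀ v : Fin n → ℝ, sndD (fun z : Fin n → ℝ => z c) x v = 0 := by
    intro c v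
    funext j
    rw [sndD_apply]
    have h1 : fderiv ℝ (fun z : Fin n → ℝ => z c)
        = fun _ => ContinuousLinearMap.proj c :=
      funext fun y => (hasFDerivAt_apply c y).fderiv
    rw [h1, fderiv_fun_const]
    simp
  have piola : ∑ c, Lc c (Pi.single c 1) = 0 := by
    have hl : ∀ c, Lc c (Pi.single c 1)
        = ∑ k ∈ Finset.univ.erase e, detCM n (Function.update
            (Function.update (fun r => rowD (f r) x) e (Pi.single c 1)) k
            (sndD (f k) x (Pi.single c 1))) := by
      intro c
      rw [hLcv c, ← Finset.add_sum_erase _ _ (Finset.mem_univ e)]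
      have h2 : detCM n (Function.update
          (Function.update (fun r => rowD (f r) x) e (Pi.single c 1)) e
          (sndD (Function.update f e (fun z => z c) e) x (Pi.single c 1))) = 0 := by
        rw [Function.update_self, hsnd0 c]
        exact (detCM n).map_coord_zero e (Function.update_self e 0 _)
      rw [h2, zero_add]
      refine Finset.sum_congr rfl fun k hk => ?_
      rw [Function.update_of_ne (Finset.ne_of_mem_erase hk)]
    rw [Finset.sum_congr rfl fun c _ => hl c]
    rw [Finset.sum_comm]
    refine Finset.sum_eq_zero fun k hk => ?_
    have hke : k ≠ e := Finset.ne_of_mem_erase hk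
    -- expand the k-th row in the standard basis
    have hexp : ∀ c, detCM n (Function.update
        (Function.update (fun r => rowD (f r) x) e (Pi.single c 1)) k
        (sndD (f k) x (Pi.single c 1)))
        = ∑ j, sndD (f k) x (Pi.single c 1) j * detCM n (Function.update
            (Function.update (fun r => rowD (f r) x) e (Pi.single c 1)) k
            (Pi.single j 1)) := fun c => detCM_update_expand _ _ _
    rw [Finset.sum_congr rfl fun c _ => hexp c]
    -- antisymmetry of the double-substituted determinant
    have hanti : ∀ c j : Fin n, detCM n (Function.update
        (Function.update (fun r => rowD (f r) x) e (Pi.single j 1)) k (Pi.single c 1))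
        = - detCM n (Function.update
        (Function.update (fun r => rowD (f r) x) e (Pi.single c 1)) k (Pi.single j 1)) := by
      intro c j
      have hswap : (Function.update
          (Function.update (fun r => rowD (f r) x) e (Pi.single j 1)) k (Pi.single c 1))
          = fun r => (Function.update
          (Function.update (fun r => rowD (f r) x) e (Pi.single c 1)) k (Pi.single j 1))
            (Equiv.swap e k r) := by
        funext r
        rcases eq_or_ne r e with rfl | hre
        · rw [Equiv.swap_apply_left, Function.update_self,
            Function.update_of_ne (Ne.symm hke), Function.update_self]
        · rcases eq_or_ne r k with rfl | hrk
          · rw [Equiv.swap_apply_right, Function.update_self,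
              Function.update_of_ne (Ne.symm hke), Function.update_self]
          · rw [Equiv.swap_apply_of_ne_of_ne hre hrk, Function.update_of_ne hrk,
              Function.update_of_ne hre, Function.update_of_ne hrk,
              Function.update_of_ne hre]
      rw [hswap, detCM_swap (Ne.symm hke)]
    -- symmetric × antisymmetric sums to zero
    have hsym : ∀ c j : Fin n, sndD (f k) x (Pi.single c 1) j
        = sndD (f k) x (Pi.single j 1) c := fun c j => sndD_symm (hF k) c j
    set T := ∑ c, ∑ j, sndD (f k) x (Pi.single c 1) j * detCM n (Function.update
        (Function.update (fun r => rowD (f r) x) e (Pi.single c 1)) k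
        (Pi.single j 1)) with hT
    have hTneg : T = -T := by
      calc T = ∑ j, ∑ c, sndD (f k) x (Pi.single c 1) j * detCM n (Function.update
            (Function.update (fun r => rowD (f r) x) e (Pi.single c 1)) k
            (Pi.single j 1)) := Finset.sum_comm
        _ = ∑ c, ∑ j, sndD (f k) x (Pi.single j 1) c * detCM n (Function.update
            (Function.update (fun r => rowD (f r) x) e (Pi.single j 1)) k
            (Pi.single c 1)) := rfl
        _ = ∑ c, ∑ j, sndD (f k) x (Pi.single c 1) j * - detCM n (Function.update
            (Function.update (fun r => rowD (f r) x) e (Pi.single c 1)) k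
            (Pi.single j 1)) := by
            refine Finset.sum_congr rfl fun c _ => Finset.sum_congr rfl fun j _ => ?_
            rw [hsym c j, hanti c j]
        _ = -T := by rw [hT]; simp [Finset.sum_neg_distrib, mul_neg]
    linarith
  -- compute the RHS
  have hRHS : ∑ k : Fin n, brPhi n φ (Function.update g k
        (brPhi n φ (Function.update f e (g k)))) x
      = (φ x)⁻¹ * ((detCM n M * ∑ c, ((φ x)⁻¹ * Lc c (Pi.single c 1)
            + CC f e c x * ψ' (Pi.single c 1)))
          + ∑ c, WW φ f e c x * ∑ k, detCM n (Function.update M k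
              (sndD (g k) x (Pi.single c 1)))) := by
    have hterm : ∀ k, brPhi n φ (Function.update g k
        (brPhi n φ (Function.update f e (g k)))) x
        = (φ x)⁻¹ * (detCM n (Function.update M k
              (fun j => ∑ c, M k c * ((φ x)⁻¹ * Lc c (Pi.single j 1)
                + CC f e c x * ψ' (Pi.single j 1))))
            + detCM n (Function.update M k
              (fun j => ∑ c, WW φ f e c x * sndD (g k) x (Pi.single c 1) j))) := by
      intro k
      rw [brPhi_update, hrowX k, (detCM n).map_update_add]
    rw [Finset.sum_congr rfl fun k _ => hterm k, ← Finset.mul_sum, Finset.sum_add_distrib]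
    congr 1
    congr 1
    · -- first part: the trace identity
      have h1 : ∀ k, detCM n (Function.update M k
            (fun j => ∑ c, M k c * ((φ x)⁻¹ * Lc c (Pi.single j 1)
              + CC f e c x * ψ' (Pi.single j 1))))
          = ∑ c, M k c * ∑ j, ((φ x)⁻¹ * Lc c (Pi.single j 1)
              + CC f e c x * ψ' (Pi.single j 1)) * (Matrix.of M).adjugate j k := by
        intro k
        have h2 : (fun j => ∑ c, M k c * ((φ x)⁻¹ * Lc c (Pi.single j 1)
              + CC f e c x * ψ' (Pi.single j 1)))
            = ∑ c, M k c • (fun j => (φ x)⁻¹ * Lc c (Pi.single j 1)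
              + CC f e c x * ψ' (Pi.single j 1)) := by
          funext j
          simp [Finset.sum_apply]
        rw [h2, detCM_update_sum]
        refine Finset.sum_congr rfl fun c _ => ?_
        rw [(detCM n).map_update_smul, smul_eq_mul]
        congr 1
        rw [detCM_update_expand]
        exact Finset.sum_congr rfl fun j _ => by rw [detCM_update_single]
      rw [Finset.sum_congr rfl fun k _ => h1 k, Finset.sum_comm]
      have h3 : ∀ c, ∑ k, M k c * ∑ j, ((φ x)⁻¹ * Lc c (Pi.single j 1)
            + CC f e c x * ψ' (Pi.single j 1)) * (Matrix.of M).adjugate j k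
          = ((φ x)⁻¹ * Lc c (Pi.single c 1) + CC f e c x * ψ' (Pi.single c 1))
              * detCM n M := by
        intro c
        have h4 : ∑ k, M k c * ∑ j, ((φ x)⁻¹ * Lc c (Pi.single j 1)
              + CC f e c x * ψ' (Pi.single j 1)) * (Matrix.of M).adjugate j k
            = ∑ j, ((φ x)⁻¹ * Lc c (Pi.single j 1)
              + CC f e c x * ψ' (Pi.single j 1))
                * ∑ k, (Matrix.of M).adjugate j k * (Matrix.of M) k c := by
          rw [Finset.sum_congr rfl fun k (_ : k ∈ Finset.univ) => Finset.mul_sum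
            Finset.univ (fun j => ((φ x)⁻¹ * Lc c (Pi.single j 1)
              + CC f e c x * ψ' (Pi.single j 1)) * (Matrix.of M).adjugate j k) (M k c)]
          rw [Finset.sum_comm]
          refine Finset.sum_congr rfl fun j _ => ?_
          rw [Finset.mul_sum]
          exact Finset.sum_congr rfl fun k _ => by
            simp only [Matrix.of_apply]; ring
        rw [h4]
        have h5 : ∀ j, ∑ k, (Matrix.of M).adjugate j k * (Matrix.of M) k c
            = ((Matrix.of M).adjugate * Matrix.of M) j c := fun j =>
          (Matrix.mul_apply).symm
        rw [Finset.sum_congr rfl fun j _ => by rw [h5 j, Matrix.adjugate_mul]]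
        simp only [Matrix.smul_apply, Matrix.one_apply, smul_eq_mul, mul_ite, mul_one,
          mul_zero]
        rw [Finset.sum_ite_eq' Finset.univ c
          (fun j => ((φ x)⁻¹ * Lc c (Pi.single j 1)
            + CC f e c x * ψ' (Pi.single j 1)) * (Matrix.of M).det)]
        · simp [detCM_apply]
      rw [Finset.sum_congr rfl fun c _ => h3 c, ← Finset.sum_mul]
      ring
    · -- second part
      have h6 : ∀ k, detCM n (Function.update M k
            (fun j => ∑ c, WW φ f e c x * sndD (g k) x (Pi.single c 1) j))
          = ∑ c, WW φ f e c x * detCM n (Function.update M k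
              (sndD (g k) x (Pi.single c 1))) := by
        intro k
        have h7 : (fun j => ∑ c, WW φ f e c x * sndD (g k) x (Pi.single c 1) j)
            = ∑ c, WW φ f e c x • sndD (g k) x (Pi.single c 1) := by
          funext j
          simp [Finset.sum_apply]
        rw [h7, detCM_update_sum]
        exact Finset.sum_congr rfl fun c _ => by
          rw [(detCM n).map_update_smul, smul_eq_mul]
      rw [Finset.sum_congr rfl fun k _ => h6 k, Finset.sum_comm]
      exact Finset.sum_congr rfl fun c _ => (Finset.mul_sum _ _ _).symm
  rw [hLHS, hRHS]
  exact final_algebra (fun c => CC f e c x)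
    (fun c => ∑ k, detCM n (Function.update M k (sndD (g k) x (Pi.single c 1))))
    (fun c => Lc c (Pi.single c 1)) (fun c => ψ' (Pi.single c 1))
    (detCM n M) ((φ x)⁻¹) piola

end FI

end NambuAux


open NambuAux in
/-- For a smooth nowhere-vanishing function `φ` on an open subset `U` of
`ℝⁿ` (`n ≥ 3`), the bracket `{f₁,…,fₙ} = (1/φ) ∂(f₁,…,fₙ)/∂(x¹,…,xⁿ)` is a Nambu-Poisson
bracket of order `n` on `U`: it is ℝ-multilinear, totally skew-symmetric, satisfies the
Leibniz rule in each slot, and satisfies the fundamental identity (at points of `U`, for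
functions smooth on `U`). -/
theorem inverse_density_jacobian_is_nambu
    (n : ℕ) (hn : 3 ≤ n) (U : Set (Fin n → ℝ)) (hU : IsOpen U)
    (φ : (Fin n → ℝ) → ℝ) (hφ : ContDiffOn ℝ (⊤ : ℕ∞) φ U) (hφ0 : ∀ x ∈ U, φ x ≠ 0) :
    -- multilinearity: additivity
    (∀ (f : Fin n → (Fin n → ℝ) → ℝ) (i : Fin n) (g h : (Fin n → ℝ) → ℝ),
      (∀ j, ContDiffOn ℝ (⊤ : ℕ∞) (f j) U) → ContDiffOn ℝ (⊤ : ℕ∞) g U → ContDiffOn ℝ (⊤ : ℕ∞) h U →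
      ∀ x ∈ U, brPhi n φ (Function.update f i (g + h)) x =
        brPhi n φ (Function.update f i g) x + brPhi n φ (Function.update f i h) x) ∧
    -- multilinearity: scalars
    (∀ (f : Fin n → (Fin n → ℝ) → ℝ) (i : Fin n) (a : ℝ) (g : (Fin n → ℝ) → ℝ),
      (∀ j, ContDiffOn ℝ (⊤ : ℕ∞) (f j) U) → ContDiffOn ℝ (⊤ : ℕ∞) g U →
      ∀ x ∈ U, brPhi n φ (Function.update f i (a • g)) x =
        a * brPhi n φ (Function.update f i g) x) ∧
    -- total skew-symmetry
    (∀ (f : Fin n → (Fin n → ℝ) → ℝ) (i j : Fin n), i ≠ j →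
      (∀ k, ContDiffOn ℝ (⊤ : ℕ∞) (f k) U) →
      ∀ x ∈ U, brPhi n φ (f ∘ Equiv.swap i j) x = - brPhi n φ f x) ∧
    -- Leibniz rule
    (∀ (f : Fin n → (Fin n → ℝ) → ℝ) (i : Fin n) (g h : (Fin n → ℝ) → ℝ),
      (∀ j, ContDiffOn ℝ (⊤ : ℕ∞) (f j) U) → ContDiffOn ℝ (⊤ : ℕ∞) g U → ContDiffOn ℝ (⊤ : ℕ∞) h U →
      ∀ x ∈ U, brPhi n φ (Function.update f i (g * h)) x =
        g x * brPhi n φ (Function.update f i h) x +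
          h x * brPhi n φ (Function.update f i g) x) ∧
    -- fundamental identity
    (∀ (f g : Fin n → (Fin n → ℝ) → ℝ),
      (∀ i, ContDiffOn ℝ (⊤ : ℕ∞) (f i) U) → (∀ i, ContDiffOn ℝ (⊤ : ℕ∞) (g i) U) →
      ∀ x ∈ U,
        brPhi n φ (Function.update f ⟨n - 1, by omega⟩ (brPhi n φ g)) x =
          ∑ k : Fin n, brPhi n φ (Function.update g k
            (brPhi n φ (Function.update f ⟨n - 1, by omega⟩ (g k)))) x) := by
  classical
  refine ⟨?_, ?_, ?_, ?_, ?_⟩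
  · -- additivity
    intro f i g h _hf hg hh x hx
    have hgd : DifferentiableAt ℝ g x :=
      ((hg.contDiffAt (hU.mem_nhds hx)).of_le (by exact WithTop.coe_le_coe.2 le_top)).differentiableAt two_ne_zero
    have hhd : DifferentiableAt ℝ h x :=
      ((hh.contDiffAt (hU.mem_nhds hx)).of_le (by exact WithTop.coe_le_coe.2 le_top)).differentiableAt two_ne_zero
    have hr : rowD (g + h) x = rowD g x + rowD h x := by
      funext c
      rw [rowD, fderiv_add hgd hhd]
      simp [rowD]
    rw [brPhi_update, brPhi_update, brPhi_update, hr, (detCM n).map_update_add, mul_add]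
  · -- scalars
    intro f i a g _hf hg x hx
    have hgd : DifferentiableAt ℝ g x :=
      ((hg.contDiffAt (hU.mem_nhds hx)).of_le (by exact WithTop.coe_le_coe.2 le_top)).differentiableAt two_ne_zero
    have hr : rowD (a • g) x = a • rowD g x := by
      funext c
      rw [rowD, fderiv_const_smul hgd a]
      simp [rowD]
    rw [brPhi_update, brPhi_update, hr, (detCM n).map_update_smul, smul_eq_mul]
    ring
  · -- skew-symmetry
    intro f i j hij _hf x hx
    have hrows : (fun r => rowD ((f ∘ Equiv.swap i j) r) x)
        = fun r => (fun r' => rowD (f r') x) (Equiv.swap i j r) := rfl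
    rw [brPhi_eq, brPhi_eq, hrows, detCM_swap hij (fun r' => rowD (f r') x)]
    ring
  · -- Leibniz
    intro f i g h _hf hg hh x hx
    have hgd : DifferentiableAt ℝ g x :=
      ((hg.contDiffAt (hU.mem_nhds hx)).of_le (by exact WithTop.coe_le_coe.2 le_top)).differentiableAt two_ne_zero
    have hhd : DifferentiableAt ℝ h x :=
      ((hh.contDiffAt (hU.mem_nhds hx)).of_le (by exact WithTop.coe_le_coe.2 le_top)).differentiableAt two_ne_zero
    have hr : rowD (g * h) x = g x • rowD h x + h x • rowD g x := by
      funext c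
      have hm : fderiv ℝ (g * h) x = g x • fderiv ℝ h x + h x • fderiv ℝ g x :=
        fderiv_mul hgd hhd
      rw [rowD, hm]
      simp [rowD]
    rw [brPhi_update, brPhi_update, brPhi_update, hr, (detCM n).map_update_add,
      (detCM n).map_update_smul, (detCM n).map_update_smul, smul_eq_mul, smul_eq_mul]
    ring
  · -- fundamental identity
    intro f g hf hg x hx
    exact fund_identity φ f ⟨n - 1, by omega⟩ U hU hφ hφ0 g hf hg x hx
end

section
/- If P is a Nambu-Poisson tensor field of even order n = 2s on a manifold M, then the Schouten-Nijenhuis bracket [P,P] vanishes. -/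
/-- The `n`-ary bracket induced by an `n`-vector field `P`. -/
noncomputable def nbr {E : Type*} [NormedAddCommGroup E] [NormedSpace ℝ E] {n : ℕ}
    (P : E → ((E →L[ℝ] ℝ) [⋀^Fin n]→ₗ[ℝ] ℝ)) (f : Fin n → E → ℝ) (x : E) : ℝ :=
  P x fun i => fderiv ℝ (f i) x

/-- Smoothness of an `n`-vector field. -/
def SmoothNV {E : Type*} [NormedAddCommGroup E] [NormedSpace ℝ E] {n : ℕ}
    (P : E → ((E →L[ℝ] ℝ) [⋀^Fin n]→ₗ[ℝ] ℝ)) : Prop :=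
  ∀ α : Fin n → E →L[ℝ] ℝ, ContDiff ℝ (⊤ : ℕ∞) fun x => P x α

/-- `P` is a Nambu-Poisson tensor: the fundamental identity holds. -/
def IsNambu {E : Type*} [NormedAddCommGroup E] [NormedSpace ℝ E] {n : ℕ}
    (P : E → ((E →L[ℝ] ℝ) [⋀^Fin (n + 1)]→ₗ[ℝ] ℝ)) : Prop :=
  ∀ (f : Fin n → E → ℝ) (g : Fin (n + 1) → E → ℝ),
    (∀ i, ContDiff ℝ (⊤ : ℕ∞) (f i)) → (∀ i, ContDiff ℝ (⊤ : ℕ∞) (g i)) →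
    nbr P (Fin.snoc f (nbr P g)) =
      ∑ k, nbr P (Function.update g k (nbr P (Fin.snoc f (g k))))


section AuxNambu
lemma nbr_comp_perm {E : Type*} [NormedAddCommGroup E] [NormedSpace ℝ E] {m : ℕ}
    (P : E → ((E →L[ℝ] ℝ) [⋀^Fin m]→ₗ[ℝ] ℝ))
    (v : Fin m → E → ℝ) (π : Equiv.Perm (Fin m)) (x : E) :
    nbr P (v ∘ π) x = ((Equiv.Perm.sign π : ℤ) : ℝ) * nbr P v x := by
  show (P x) (fun i => fderiv ℝ ((v ∘ π) i) x) = _ * (P x) (fun i => fderiv ℝ (v i) x)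
  rw [show (fun i => fderiv ℝ ((v ∘ π) i) x) = (fun i => fderiv ℝ (v i) x) ∘ π from rfl,
    AlternatingMap.map_perm]
  simp [Units.smul_def]

lemma rho_surj {n : ℕ} (k : Fin (n + 1)) :
    Function.Surjective (Fin.snoc (α := fun _ => Fin (n + 1)) k.succAbove k) := by
  intro y
  rcases eq_or_ne y k with h | h
  · exact ⟨Fin.last n, by simp [h]⟩
  · obtain ⟨i, hi⟩ := Fin.exists_succAbove_eq h
    exact ⟨Fin.castSucc i, by simp [hi]⟩

noncomputable def rho {n : ℕ} (k : Fin (n + 1)) : Equiv.Perm (Fin (n + 1)) :=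
  Equiv.ofBijective _ (Finite.surjective_iff_bijective.mp (rho_surj k))

@[simp] lemma rho_castSucc {n : ℕ} (k : Fin (n + 1)) (i : Fin n) :
    rho k (Fin.castSucc i) = k.succAbove i := by
  simp [rho, Equiv.ofBijective_apply]

@[simp] lemma rho_last {n : ℕ} (k : Fin (n + 1)) : rho k (Fin.last n) = k := by
  simp [rho, Equiv.ofBijective_apply]

def tfun {n : ℕ} (k : Fin (n + 1)) : Fin (n + (n + 1)) → Fin (n + (n + 1)) :=
  Fin.addCases (motive := fun _ => Fin (n + (n + 1)))
    (fun i => Fin.natAdd n (k.succAbove i))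
    (Fin.snoc (fun i : Fin n => Fin.castAdd (n + 1) i) (Fin.natAdd n k))

lemma tfun_surj {n : ℕ} (k : Fin (n + 1)) : Function.Surjective (tfun k) := by
  intro y
  induction y using Fin.addCases with
  | left i =>
      exact ⟨Fin.natAdd n (Fin.castSucc i), by simp [tfun]⟩
  | right j =>
      rcases eq_or_ne j k with h | h
      · refine ⟨Fin.natAdd n (Fin.last n), ?_⟩
        simp only [tfun]
        rw [Fin.addCases_right, Fin.snoc_last, h]
      · obtain ⟨i, hi⟩ := Fin.exists_succAbove_eq h
        exact ⟨Fin.castAdd (n + 1) i, by simp [tfun, hi]⟩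

noncomputable def tau {n : ℕ} (k : Fin (n + 1)) : Equiv.Perm (Fin (n + (n + 1))) :=
  Equiv.ofBijective _ (Finite.surjective_iff_bijective.mp (tfun_surj k))

@[simp] lemma tau_castAdd {n : ℕ} (k : Fin (n + 1)) (i : Fin n) :
    tau k (Fin.castAdd (n + 1) i) = Fin.natAdd n (k.succAbove i) := by
  simp [tau, tfun, Equiv.ofBijective_apply]

@[simp] lemma tau_natAdd_castSucc {n : ℕ} (k : Fin (n + 1)) (i : Fin n) :
    tau k (Fin.natAdd n (Fin.castSucc i)) = Fin.castAdd (n + 1) i := by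
  simp [tau, tfun, Equiv.ofBijective_apply]

@[simp] lemma tau_natAdd_last {n : ℕ} (k : Fin (n + 1)) :
    tau k (Fin.natAdd n (Fin.last n)) = Fin.natAdd n k := by
  show tfun k _ = _
  simp only [tfun]
  rw [Fin.addCases_right, Fin.snoc_last]

end AuxNambu

/-- If `P` is a Nambu-Poisson tensor of even order `n + 1 = 2s ≥ 3`, then
its Schouten-Nijenhuis square vanishes, `[P,P] = 0`. Since `[P,P]` is the
`(2(n+1)-1)`-vector field obtained (up to a nonzero combinatorial constant) by totally
antisymmetrizing `(F₁,…,F_{2n+1}) ↦ {F₁,…,Fₙ,{F_{n+1},…,F_{2n+1}}}`, and multivector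
fields are determined by their values on exact differentials, `[P,P] = 0` is expressed
as the vanishing of this antisymmetrization on arbitrary smooth functions. -/

theorem even_order_nambu_schouten_square_zero
    {E : Type*} [NormedAddCommGroup E] [NormedSpace ℝ E] [FiniteDimensional ℝ E]
    (n : ℕ) (hn : 2 ≤ n) (heven : Even (n + 1))
    (P : E → ((E →L[ℝ] ℝ) [⋀^Fin (n + 1)]→ₗ[ℝ] ℝ))
    (hPs : SmoothNV P) (hP : IsNambu P)
    (F : Fin (n + (n + 1)) → E → ℝ) (hF : ∀ i, ContDiff ℝ (⊤ : ℕ∞) (F i)) (x : E) :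
    ∑ σ : Equiv.Perm (Fin (n + (n + 1))),
      ((Equiv.Perm.sign σ : ℤ) : ℝ) *
        nbr P (Fin.snoc (fun i : Fin n => F (σ (Fin.castAdd (n + 1) i)))
          (nbr P (fun j : Fin (n + 1) => F (σ (Fin.natAdd n j))))) x = 0 := by
  classical
  -- the Schouten-square integrand
  let S : (Fin (n + (n + 1)) → E → ℝ) → ℝ := fun G =>
    nbr P (Fin.snoc (fun i : Fin n => G (Fin.castAdd (n + 1) i))
      (nbr P (fun j : Fin (n + 1) => G (Fin.natAdd n j)))) x
  let L : ℝ := ∑ σ : Equiv.Perm (Fin (n + (n + 1))),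
    ((Equiv.Perm.sign σ : ℤ) : ℝ) * S (fun i => F (σ i))
  -- step 1: expansion of each term by the fundamental identity
  have expand : ∀ σ : Equiv.Perm (Fin (n + (n + 1))),
      S (fun i => F (σ i)) =
        ∑ k : Fin (n + 1), ((Equiv.Perm.sign (rho k) : ℤ) : ℝ) *
          S (fun i => F (σ (tau k i))) := by
    intro σ
    set f : Fin n → E → ℝ := fun i => F (σ (Fin.castAdd (n + 1) i)) with hf
    set g : Fin (n + 1) → E → ℝ := fun j => F (σ (Fin.natAdd n j)) with hg
    have hfc : ∀ i, ContDiff ℝ (⊤ : ℕ∞) (f i) := fun i => hF _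
    have hgc : ∀ i, ContDiff ℝ (⊤ : ℕ∞) (g i) := fun i => hF _
    have h1 := congrFun (hP f g hfc hgc) x
    rw [Finset.sum_apply] at h1
    have per_k : ∀ k : Fin (n + 1),
        nbr P (Function.update g k (nbr P (Fin.snoc f (g k)))) x =
          ((Equiv.Perm.sign (rho k) : ℤ) : ℝ) * S (fun i => F (σ (tau k i))) := by
      intro k
      set B : E → ℝ := nbr P (Fin.snoc f (g k)) with hB
      have h0 : ∀ j' : Fin (n + 1),
          (Fin.snoc (fun i => g (k.succAbove i)) B : Fin (n + 1) → E → ℝ) j' =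
            Function.update g k B (rho k j') := by
        intro j'
        induction j' using Fin.lastCases with
        | last => rw [Fin.snoc_last, rho_last, Function.update_self]
        | cast i =>
            rw [Fin.snoc_castSucc, rho_castSucc,
              Function.update_of_ne (Fin.succAbove_ne k i)]
      have hupd : Function.update g k B =
          (Fin.snoc (fun i => g (k.succAbove i)) B : Fin (n + 1) → E → ℝ) ∘ ⇑(rho k)⁻¹ := by
        funext j
        have := h0 ((rho k)⁻¹ j)
        rw [Equiv.Perm.inv_def, Equiv.apply_symm_apply] at this
        exact this.symm
      rw [hupd, nbr_comp_perm, Equiv.Perm.sign_inv]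
      congr 1
      show nbr P (Fin.snoc (fun i : Fin n => g (k.succAbove i)) B) x =
        nbr P (Fin.snoc (fun i : Fin n => F (σ (tau k (Fin.castAdd (n + 1) i))))
          (nbr P (fun j : Fin (n + 1) => F (σ (tau k (Fin.natAdd n j)))))) x
      have e1 : (fun i : Fin n => F (σ (tau k (Fin.castAdd (n + 1) i)))) =
          fun i => g (k.succAbove i) := by
        funext i; rw [tau_castAdd]
      have e2 : (fun j : Fin (n + 1) => F (σ (tau k (Fin.natAdd n j)))) =
          Fin.snoc f (g k) := by
        funext j
        induction j using Fin.lastCases with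
        | last => rw [tau_natAdd_last, Fin.snoc_last]
        | cast i => rw [tau_natAdd_castSucc, Fin.snoc_castSucc]
      rw [e1, e2]
    calc S (fun i => F (σ i))
        = ∑ k : Fin (n + 1), nbr P (Function.update g k (nbr P (Fin.snoc f (g k)))) x := h1
      _ = _ := Finset.sum_congr rfl fun k _ => per_k k
  -- step 2: reindexing each k-sum
  have sq : ∀ k : Fin (n + 1),
      ((Equiv.Perm.sign (tau k) : ℤ) : ℝ) * ((Equiv.Perm.sign (tau k) : ℤ) : ℝ) = 1 := by
    intro k
    rcases Int.units_eq_one_or (Equiv.Perm.sign (tau k)) with h | h <;> rw [h] <;> norm_num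
  have reindex : ∀ k : Fin (n + 1),
      (∑ σ : Equiv.Perm (Fin (n + (n + 1))),
        ((Equiv.Perm.sign σ : ℤ) : ℝ) *
          (((Equiv.Perm.sign (rho k) : ℤ) : ℝ) * S (fun i => F (σ (tau k i))))) =
      (((Equiv.Perm.sign (tau k) : ℤ) : ℝ) * ((Equiv.Perm.sign (rho k) : ℤ) : ℝ)) * L := by
    intro k
    rw [Finset.mul_sum]
    refine (Fintype.sum_equiv (Equiv.mulRight (tau k)⁻¹) _ _ ?_).symm
    intro σ
    have hs : (((Equiv.Perm.sign (σ * (tau k)⁻¹) : ℤ)) : ℝ) =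
        ((Equiv.Perm.sign σ : ℤ) : ℝ) * ((Equiv.Perm.sign (tau k) : ℤ) : ℝ) := by
      rw [map_mul, map_inv]
      rcases Int.units_eq_one_or (Equiv.Perm.sign σ) with h1 | h1 <;>
        rcases Int.units_eq_one_or (Equiv.Perm.sign (tau k)) with h2 | h2 <;>
          simp [h1, h2]
    have hc : (fun i => F ((σ * (tau k)⁻¹) (tau k i))) = fun i => F (σ i) := by
      funext i
      rw [Equiv.Perm.mul_apply, Equiv.Perm.inv_def, Equiv.symm_apply_apply]
    show _ = ((Equiv.Perm.sign (σ * (tau k)⁻¹) : ℤ) : ℝ) *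
        (((Equiv.Perm.sign (rho k) : ℤ) : ℝ) * S (fun i => F ((σ * (tau k)⁻¹) (tau k i))))
    rw [hc, hs]
    ring
  -- step 3: combine
  set ε : Fin (n + 1) → ℤ :=
    fun k => ((Equiv.Perm.sign (tau k) * Equiv.Perm.sign (rho k) : ℤˣ) : ℤ) with hε
  have main : L = ((∑ k : Fin (n + 1), ε k : ℤ) : ℝ) * L := by
    calc L = ∑ σ : Equiv.Perm (Fin (n + (n + 1))), ((Equiv.Perm.sign σ : ℤ) : ℝ) *
          ∑ k : Fin (n + 1), ((Equiv.Perm.sign (rho k) : ℤ) : ℝ) *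
            S (fun i => F (σ (tau k i))) := by
          exact Finset.sum_congr rfl fun σ _ => by rw [expand σ]
      _ = ∑ σ : Equiv.Perm (Fin (n + (n + 1))), ∑ k : Fin (n + 1),
          ((Equiv.Perm.sign σ : ℤ) : ℝ) * (((Equiv.Perm.sign (rho k) : ℤ) : ℝ) *
            S (fun i => F (σ (tau k i)))) := by
          exact Finset.sum_congr rfl fun σ _ => Finset.mul_sum _ _ _
      _ = ∑ k : Fin (n + 1), ∑ σ : Equiv.Perm (Fin (n + (n + 1))),
          ((Equiv.Perm.sign σ : ℤ) : ℝ) * (((Equiv.Perm.sign (rho k) : ℤ) : ℝ) *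
            S (fun i => F (σ (tau k i)))) := Finset.sum_comm
      _ = ∑ k : Fin (n + 1), ((ε k : ℝ)) * L := by
          refine Finset.sum_congr rfl fun k _ => ?_
          rw [reindex k]
          simp only [hε]
          push_cast
          ring
      _ = ((∑ k : Fin (n + 1), ε k : ℤ) : ℝ) * L := by
          push_cast
          rw [Finset.sum_mul]
  set m : ℤ := ∑ k : Fin (n + 1), ε k with hm
  have h1 : ∀ k : Fin (n + 1), ((ε k : ZMod 2)) = 1 := by
    intro k
    have he : ε k = ((Equiv.Perm.sign (tau k) * Equiv.Perm.sign (rho k) : ℤˣ) : ℤ) := rfl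
    have hor : ε k = 1 ∨ ε k = -1 := by
      rw [he]
      rcases Int.units_eq_one_or (Equiv.Perm.sign (tau k) * Equiv.Perm.sign (rho k)) with
        h | h <;> rw [h]
      · left; rfl
      · right; rfl
    rcases hor with h | h <;> rw [h] <;> decide
  have hmod : (m : ZMod 2) = 0 := by
    have hdvd : ((n + 1 : ℕ) : ZMod 2) = 0 := by
      have h2 : (2 : ℕ) ∣ (n + 1) := heven.two_dvd
      exact (ZMod.natCast_eq_zero_iff _ _).mpr h2
    rw [hm]
    push_cast
    rw [Finset.sum_congr rfl fun k _ => h1 k, Finset.sum_const, Finset.card_univ,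
      Fintype.card_fin, nsmul_eq_mul, mul_one]
    exact_mod_cast hdvd
  have hm1 : m ≠ 1 := by
    intro h
    rw [h] at hmod
    exact one_ne_zero hmod
  have hL : L = 0 := by
    by_contra hL0
    have h2 : ((m : ℝ) - 1) * L = 0 := by linear_combination -main
    rcases mul_eq_zero.mp h2 with h | h
    · have h3 : (m : ℝ) = 1 := by linarith
      exact hm1 (by exact_mod_cast h3)
    · exact hL0 h
  exact hL
end

section
/- If P is a Nambu-Poisson tensor of order n > 2 on M and f_1,...,f_p ∈ C^∞(M) are fixed with p ≤ n-2, then the (n-p)-ary bracket obtained by inserting f_1,...,f_p as the first p arguments of the Nambu-Poisson bracket is again a Nambu-Poisson bracket of order n-p (a Poisson bracket when n-p = 2). -/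
section Aux

variable {p q : ℕ} {E : Type*} [NormedAddCommGroup E] [NormedSpace ℝ E]

lemma natAddInj {m : ℕ} : Function.Injective (Fin.natAdd p : Fin m → Fin (p + m)) := by
  intro a b h
  have := Fin.val_eq_of_eq h
  simp only [Fin.coe_natAdd] at this
  exact Fin.ext (by omega)

lemma append_update {α : Sort*} (F : Fin p → α) (g : Fin (q + 1) → α) (i : Fin (q + 1)) (a : α) :
    Fin.append (n := q + 1) F (Function.update g i a) =
      Function.update (Fin.append (n := q + 1) F g) (Fin.natAdd p i) a := by
  funext j
  refine Fin.addCases (fun j' => ?_) (fun j' => ?_) j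
  · rw [Fin.append_left, Function.update_of_ne, Fin.append_left]
    exact Fin.ne_of_val_ne (by simp; omega)
  · rcases eq_or_ne j' i with rfl | h
    · rw [Fin.append_right, Function.update_self, Function.update_self]
    · rw [Fin.append_right, Function.update_of_ne h,
        Function.update_of_ne (fun hc => h (natAddInj hc)), Fin.append_right]

lemma fderivUpdate {n : ℕ} (h : Fin n → E → ℝ) (k : Fin n) (φ : E → ℝ) (x : E) :
    (fun j => fderiv ℝ (Function.update h k φ j) x) =
      Function.update (fun j => fderiv ℝ (h j) x) k (fderiv ℝ φ x) := by
  funext j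
  rcases eq_or_ne j k with rfl | hj
  · simp
  · rw [Function.update_of_ne hj, Function.update_of_ne hj]

lemma append_comp_swap {α : Sort*} (F : Fin p → α) (g : Fin (q + 1) → α) (i j : Fin (q + 1)) :
    Fin.append (n := q + 1) F (g ∘ Equiv.swap i j) =
      (Fin.append (n := q + 1) F g) ∘ Equiv.swap (Fin.natAdd p i) (Fin.natAdd p j) := by
  funext k
  refine Fin.addCases (fun k' => ?_) (fun k' => ?_) k
  · have h1 : (Fin.castAdd (q + 1) k' : Fin (p + (q + 1))) ≠ Fin.natAdd p i :=
      Fin.ne_of_val_ne (by simp; omega)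
    have h2 : (Fin.castAdd (q + 1) k' : Fin (p + (q + 1))) ≠ Fin.natAdd p j :=
      Fin.ne_of_val_ne (by simp; omega)
    simp only [Function.comp_apply, Equiv.swap_apply_of_ne_of_ne h1 h2, Fin.append_left]
  · simp only [Function.comp_apply, Fin.append_right, natAddInj.swap_apply, Fin.append_right]

end Aux


/-- Let `P` be a Nambu-Poisson tensor of order `n = p + q + 1 > 2` and fix
smooth functions `F₁,…,F_p` with `p ≤ n − 2` (i.e. `q ≥ 1`). Then the `(q+1)`-ary
bracket `{g₁,…,g_{q+1}}' := {F₁,…,F_p,g₁,…,g_{q+1}}` is again a Nambu-Poisson bracket of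
order `n − p = q + 1` (a Poisson bracket when `q + 1 = 2`): it is ℝ-multilinear, totally
skew-symmetric, satisfies the Leibniz rule, and satisfies the fundamental identity. -/
theorem fixed_arguments_bracket_is_nambu
    {E : Type*} [NormedAddCommGroup E] [NormedSpace ℝ E] [FiniteDimensional ℝ E]
    (p q : ℕ) (hq : 1 ≤ q) (hn : 2 < p + q + 1)
    (P : E → ((E →L[ℝ] ℝ) [⋀^Fin (p + q + 1)]→ₗ[ℝ] ℝ))
    (hPs : SmoothNV P) (hP : IsNambu P)
    (F : Fin p → E → ℝ) (hF : ∀ i, ContDiff ℝ (⊤ : ℕ∞) (F i)) :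
    -- additivity in each slot
    (∀ (g : Fin (q + 1) → E → ℝ) (i : Fin (q + 1)) (a b : E → ℝ),
      (∀ j, ContDiff ℝ (⊤ : ℕ∞) (g j)) → ContDiff ℝ (⊤ : ℕ∞) a → ContDiff ℝ (⊤ : ℕ∞) b →
      nbr P (Fin.append (n := q + 1) F (Function.update g i (a + b))) =
        nbr P (Fin.append (n := q + 1) F (Function.update g i a)) +
          nbr P (Fin.append (n := q + 1) F (Function.update g i b))) ∧
    -- scalars
    (∀ (g : Fin (q + 1) → E → ℝ) (i : Fin (q + 1)) (c : ℝ) (a : E → ℝ),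
      (∀ j, ContDiff ℝ (⊤ : ℕ∞) (g j)) → ContDiff ℝ (⊤ : ℕ∞) a →
      nbr P (Fin.append (n := q + 1) F (Function.update g i (c • a))) =
        c • nbr P (Fin.append (n := q + 1) F (Function.update g i a))) ∧
    -- total skew-symmetry
    (∀ (g : Fin (q + 1) → E → ℝ) (i j : Fin (q + 1)), i ≠ j →
      (∀ k, ContDiff ℝ (⊤ : ℕ∞) (g k)) →
      nbr P (Fin.append (n := q + 1) F (g ∘ Equiv.swap i j)) = - nbr P (Fin.append (n := q + 1) F g)) ∧
    -- Leibniz rule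
    (∀ (g : Fin (q + 1) → E → ℝ) (i : Fin (q + 1)) (a b : E → ℝ),
      (∀ j, ContDiff ℝ (⊤ : ℕ∞) (g j)) → ContDiff ℝ (⊤ : ℕ∞) a → ContDiff ℝ (⊤ : ℕ∞) b →
      nbr P (Fin.append (n := q + 1) F (Function.update g i (a * b))) =
        a * nbr P (Fin.append (n := q + 1) F (Function.update g i b)) +
          b * nbr P (Fin.append (n := q + 1) F (Function.update g i a))) ∧
    -- fundamental identity
    (∀ (f : Fin q → E → ℝ) (g : Fin (q + 1) → E → ℝ),
      (∀ i, ContDiff ℝ (⊤ : ℕ∞) (f i)) → (∀ i, ContDiff ℝ (⊤ : ℕ∞) (g i)) →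
      nbr P (Fin.append (n := q + 1) F (Fin.snoc f (nbr P (Fin.append (n := q + 1) F g)))) =
        ∑ k : Fin (q + 1), nbr P (Fin.append (n := q + 1) F (Function.update g k
          (nbr P (Fin.append (n := q + 1) F (Fin.snoc f (g k))))))) := by
  refine ⟨?_, ?_, ?_, ?_, ?_⟩
  · -- additivity
    intro g i a b hg ha hb
    funext x
    simp only [nbr, append_update, fderivUpdate, Pi.add_apply]
    rw [show (a + b) = fun y => a y + b y from rfl,
      fderiv_fun_add ((ha.differentiable (by simp)).differentiableAt)
        ((hb.differentiable (by simp)).differentiableAt)]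
    exact (P x).map_update_add _ _ _ _
  · -- scalars
    intro g i c a hg ha
    funext x
    simp only [nbr, append_update, fderivUpdate, Pi.smul_apply]
    rw [show (c • a) = fun y => c • a y from rfl,
      fderiv_fun_const_smul ((ha.differentiable (by simp)).differentiableAt) c]
    exact (P x).map_update_smul _ _ _ _
  · -- skew-symmetry
    intro g i j hij hg
    funext x
    simp only [nbr, append_comp_swap, Pi.neg_apply]
    exact (P x).map_swap (fun k => fderiv ℝ (Fin.append (n := q + 1) F g k) x)
      (fun hc => hij (natAddInj hc))
  · -- Leibniz
    intro g i a b hg ha hb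
    funext x
    simp only [nbr, append_update, fderivUpdate, Pi.add_apply, Pi.mul_apply]
    rw [show (a * b) = fun y => a y * b y from rfl,
      fderiv_fun_mul ((ha.differentiable (by simp)).differentiableAt)
        ((hb.differentiable (by simp)).differentiableAt),
      (P x).map_update_add, (P x).map_update_smul, (P x).map_update_smul]
    simp [smul_eq_mul]
  · -- fundamental identity
    intro f g hf hg
    have hFf : ∀ i, ContDiff ℝ (⊤ : ℕ∞) (Fin.append (n := q) F f i) := by
      intro i
      refine Fin.addCases (fun j => ?_) (fun j => ?_) i
      · rw [Fin.append_left]; exact hF j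
      · rw [Fin.append_right]; exact hf j
    have hFg : ∀ i, ContDiff ℝ (⊤ : ℕ∞) (Fin.append (n := q + 1) F g i) := by
      intro i
      refine Fin.addCases (fun j => ?_) (fun j => ?_) i
      · rw [Fin.append_left]; exact hF j
      · rw [Fin.append_right]; exact hg j
    have key := hP (Fin.append (n := q) F f) (Fin.append (n := q + 1) F g) hFf hFg
    have hsum := Fin.sum_univ_add (a := p) (b := q + 1) (M := E → ℝ)
      (f := fun k => nbr P (Function.update (Fin.append (n := q + 1) F g) k
        (nbr P (Fin.snoc (Fin.append (n := q) F f) (Fin.append (n := q + 1) F g k)))))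
    have hzero : ∀ k' : Fin p,
        nbr P (Function.update (Fin.append (n := q + 1) F g) (Fin.castAdd (q + 1) k')
          (nbr P (Fin.snoc (Fin.append (n := q) F f)
            (Fin.append (n := q + 1) F g (Fin.castAdd (q + 1) k'))))) = 0 := by
      intro k'
      have hZ : nbr P (Fin.snoc (Fin.append (n := q) F f)
          (Fin.append (n := q + 1) F g (Fin.castAdd (q + 1) k'))) = fun _ : E => (0 : ℝ) := by
        funext x
        refine (P x).map_eq_zero_of_eq _
          (i := Fin.castSucc (Fin.castAdd q k')) (j := Fin.last (p + q)) ?_ ?_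
        · simp [Fin.snoc_castSucc, Fin.snoc_last, Fin.append_left]
        · refine Fin.ne_of_val_ne ?_
          have := k'.isLt
          simp
          omega
      rw [hZ]
      funext x
      simp only [nbr, fderivUpdate, Pi.zero_apply]
      rw [fderiv_const_apply]
      exact (P x).map_update_zero _ _
    calc nbr P (Fin.append (n := q + 1) F (Fin.snoc f (nbr P (Fin.append (n := q + 1) F g))))
        = nbr P (Fin.snoc (Fin.append (n := q) F f) (nbr P (Fin.append (n := q + 1) F g))) := by
          rw [Fin.append_snoc]
      _ = ∑ k, nbr P (Function.update (Fin.append (n := q + 1) F g) k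
            (nbr P (Fin.snoc (Fin.append (n := q) F f) (Fin.append (n := q + 1) F g k)))) := key
      _ = (∑ k' : Fin p, nbr P (Function.update (Fin.append (n := q + 1) F g) (Fin.castAdd (q + 1) k')
            (nbr P (Fin.snoc (Fin.append (n := q) F f)
              (Fin.append (n := q + 1) F g (Fin.castAdd (q + 1) k')))))) +
          ∑ k'' : Fin (q + 1), nbr P (Function.update (Fin.append (n := q + 1) F g) (Fin.natAdd p k'')
            (nbr P (Fin.snoc (Fin.append (n := q) F f)
              (Fin.append (n := q + 1) F g (Fin.natAdd p k''))))) := hsum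
      _ = ∑ k'' : Fin (q + 1), nbr P (Function.update (Fin.append (n := q + 1) F g) (Fin.natAdd p k'')
            (nbr P (Fin.snoc (Fin.append (n := q) F f)
              (Fin.append (n := q + 1) F g (Fin.natAdd p k''))))) := by
          rw [Finset.sum_eq_zero fun k' _ => hzero k', zero_add]
      _ = ∑ k : Fin (q + 1), nbr P (Fin.append (n := q + 1) F (Function.update g k
            (nbr P (Fin.append (n := q + 1) F (Fin.snoc f (g k)))))) := by
          refine Finset.sum_congr rfl fun k'' _ => ?_
          rw [Fin.append_right, ← Fin.append_snoc, ← append_update]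
end

section
/- If P is a Nambu-Poisson tensor of order n ≥ 3 on a manifold M, then fP is a Nambu-Poisson tensor for every smooth function f ∈ C^∞(M). -/
set_option linter.unusedSectionVars false
set_option linter.unusedVariables false
set_option maxHeartbeats 1000000

section A
variable {E : Type*} [NormedAddCommGroup E] [NormedSpace ℝ E]

theorem contDiff_finset_prod {ι : Type*} {f : ι → E → ℝ} {s : Finset ι}
    (h : ∀ i ∈ s, ContDiff ℝ (⊤ : ℕ∞) (f i)) : ContDiff ℝ (⊤ : ℕ∞) (fun x => ∏ i ∈ s, f i x) := by
  classical
  induction s using Finset.cons_induction with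
  | empty => simpa using contDiff_const
  | cons i s hi ih =>
    simp only [Finset.prod_cons]
    exact (h i (Finset.mem_cons_self _ _)).mul (ih fun j hj => h j (Finset.mem_cons_of_mem hj))

theorem clm_expand [FiniteDimensional ℝ E] (φ : E →L[ℝ] ℝ) :
    φ = ∑ j, φ (Module.finBasis ℝ E j) •
      LinearMap.toContinuousLinearMap ((Module.finBasis ℝ E).coord j) := by
  set b := Module.finBasis ℝ E
  ext x
  have h0 : x = ∑ j, (b.repr x) j • b j := (b.sum_repr x).symm
  conv_lhs => rw [h0]
  rw [map_sum]
  simp [b.coord_apply, mul_comm]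

theorem contDiff_nbr {n : ℕ} [FiniteDimensional ℝ E]
    (P : E → ((E →L[ℝ] ℝ) [⋀^Fin n]→ₗ[ℝ] ℝ)) (hPs : SmoothNV P)
    (g : Fin n → E → ℝ) (hg : ∀ i, ContDiff ℝ (⊤ : ℕ∞) (g i)) :
    ContDiff ℝ (⊤ : ℕ∞) (nbr P g) := by
  classical
  set d := Module.finrank ℝ E with hd
  set b := Module.finBasis ℝ E with hb
  set ε : Fin d → E →L[ℝ] ℝ := fun j => LinearMap.toContinuousLinearMap (b.coord j) with hε
  have key : nbr P g = fun x =>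
      ∑ r ∈ Fintype.piFinset (fun _ : Fin n => (Finset.univ : Finset (Fin d))),
        (∏ i, fderiv ℝ (g i) x (b (r i))) • (P x) (fun i => ε (r i)) := by
    funext x
    have h1 : (fun i => fderiv ℝ (g i) x) =
        fun i => ∑ j, (fderiv ℝ (g i) x (b j)) • ε j := by
      funext i; exact clm_expand _
    rw [nbr, h1]
    rw [show ((P x) fun i => ∑ j, (fderiv ℝ (g i) x (b j)) • ε j)
        = (P x).toMultilinearMap fun i => ∑ j ∈ Finset.univ, (fderiv ℝ (g i) x (b j)) • ε j from rfl]
    rw [MultilinearMap.map_sum_finset]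
    refine Finset.sum_congr rfl fun r _ => ?_
    exact (P x).toMultilinearMap.map_smul_univ _ _
  rw [key]
  refine ContDiff.sum fun r _ => ?_
  have h2 : ContDiff ℝ (⊤ : ℕ∞) fun x => ∏ i, fderiv ℝ (g i) x (b (r i)) :=
    contDiff_finset_prod fun i _ =>
      ((hg i).fderiv_right (le_refl _)).clm_apply contDiff_const
  exact (h2.smul (hPs fun i => ε (r i)))
end A

section B
variable {E : Type*} [NormedAddCommGroup E] [NormedSpace ℝ E]

theorem fderiv_snoc {n : ℕ} (F : Fin n → E → ℝ) (h : E → ℝ) (x : E) :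
    (fun i : Fin (n+1) => fderiv ℝ ((Fin.snoc F h : Fin (n+1) → E → ℝ) i) x)
      = Fin.snoc (fun i => fderiv ℝ (F i) x) (fderiv ℝ h x) := by
  funext i
  refine Fin.lastCases ?_ (fun j => ?_) i
  · simp
  · simp

theorem fderiv_update_fam {n : ℕ} (g : Fin n → E → ℝ) (k : Fin n) (q : E → ℝ) (x : E) :
    (fun i => fderiv ℝ (Function.update g k q i) x)
      = Function.update (fun i => fderiv ℝ (g i) x) k (fderiv ℝ q x) := by
  funext i
  rcases eq_or_ne i k with rfl | hik
  · simp
  · simp [Function.update_of_ne hik]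

theorem smooth_snoc {n : ℕ} {F : Fin n → E → ℝ} {h : E → ℝ}
    (hF : ∀ i, ContDiff ℝ (⊤ : ℕ∞) (F i)) (hh : ContDiff ℝ (⊤ : ℕ∞) h) :
    ∀ i : Fin (n+1), ContDiff ℝ (⊤ : ℕ∞) ((Fin.snoc F h : Fin (n+1) → E → ℝ) i) := by
  intro i
  refine Fin.lastCases ?_ (fun j => ?_) i
  · simpa using hh
  · simpa using hF j

theorem snoc_snoc_update {V : Type*} {m : ℕ} (F : Fin (m+1) → V) (h : V) (u w : V) :
    (Fin.snoc (Fin.snoc F w) h : Fin (m+3) → V) =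
      Function.update (Fin.snoc (Fin.snoc F u) h) ((Fin.last (m+1)).castSucc) w := by
  funext i
  refine Fin.lastCases ?_ (fun j => ?_) i
  · rw [Function.update_of_ne (Fin.castSucc_lt_last (Fin.last (m+1))).ne']
    simp
  · refine Fin.lastCases ?_ (fun j' => ?_) j
    · simp
    · rw [Function.update_of_ne (by simp [Fin.ext_iff]; omega)]
      simp

theorem map_mid_two {V : Type*} [AddCommGroup V] [Module ℝ V] {m : ℕ}
    (T : V [⋀^Fin (m+3)]→ₗ[ℝ] ℝ) (F : Fin (m+1) → V) (h : V) (c c' : ℝ) (u v : V) :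
    T (Fin.snoc (Fin.snoc F (c • u + c' • v)) h)
      = c * T (Fin.snoc (Fin.snoc F u) h) + c' * T (Fin.snoc (Fin.snoc F v) h) := by
  rw [snoc_snoc_update F h u (c • u + c' • v), T.map_update_add, T.map_update_smul,
    T.map_update_smul, ← snoc_snoc_update F h u u, ← snoc_snoc_update F h u v]
  simp [smul_eq_mul]

theorem map_update_four {V : Type*} [AddCommGroup V] [Module ℝ V] {N : ℕ}
    (T : V [⋀^Fin N]→ₗ[ℝ] ℝ) (B : Fin N → V) (k : Fin N) (c1 c2 c3 c4 : ℝ)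
    (u1 u2 u3 u4 : V) :
    T (Function.update B k (c1 • u1 + c2 • u2 + (c3 • u3 + c4 • u4)))
      = c1 * T (Function.update B k u1) + c2 * T (Function.update B k u2)
        + c3 * T (Function.update B k u3) + c4 * T (Function.update B k u4) := by
  rw [T.map_update_add, T.map_update_add, T.map_update_add, T.map_update_smul,
    T.map_update_smul, T.map_update_smul, T.map_update_smul]
  simp [smul_eq_mul]; ring

theorem nbr_snoc_snoc {m : ℕ} (P : E → ((E →L[ℝ] ℝ) [⋀^Fin (m+3)]→ₗ[ℝ] ℝ))
    (F : Fin (m+1) → E → ℝ) (u h : E → ℝ) (x : E) :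
    nbr P (Fin.snoc (Fin.snoc F u) h) x
      = P x (Fin.snoc (Fin.snoc (fun i => fderiv ℝ (F i) x) (fderiv ℝ u x)) (fderiv ℝ h x)) := by
  rw [nbr, fderiv_snoc (Fin.snoc F u) h x, fderiv_snoc F u x]

end B

section C
variable {E : Type*} [NormedAddCommGroup E] [NormedSpace ℝ E] [FiniteDimensional ℝ E]

theorem star_identity {m : ℕ}
    (P : E → ((E →L[ℝ] ℝ) [⋀^Fin (m+3)]→ₗ[ℝ] ℝ))
    (hPs : SmoothNV P) (hP : IsNambu P)
    (Fb : Fin (m+1) → E → ℝ) (a b : E → ℝ) (g : Fin (m+3) → E → ℝ)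
    (hFb : ∀ i, ContDiff ℝ (⊤ : ℕ∞) (Fb i)) (ha : ContDiff ℝ (⊤ : ℕ∞) a) (hb : ContDiff ℝ (⊤ : ℕ∞) b)
    (hg : ∀ i, ContDiff ℝ (⊤ : ℕ∞) (g i)) (x : E) :
    ∑ k, (nbr P (Fin.snoc (Fin.snoc Fb a) (g k)) x
            * (P x) (Function.update (fun i => fderiv ℝ (g i) x) k (fderiv ℝ b x))
        + nbr P (Fin.snoc (Fin.snoc Fb b) (g k)) x
            * (P x) (Function.update (fun i => fderiv ℝ (g i) x) k (fderiv ℝ a x))) = 0 := by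
  classical
  set dg : Fin (m+3) → (E →L[ℝ] ℝ) := fun i => fderiv ℝ (g i) x with hdg
  set A : Fin (m+3) → E → ℝ := fun k => nbr P (Fin.snoc (Fin.snoc Fb a) (g k)) with hA
  set C : Fin (m+3) → E → ℝ := fun k => nbr P (Fin.snoc (Fin.snoc Fb b) (g k)) with hC
  have hAs : ∀ k, ContDiff ℝ (⊤ : ℕ∞) (A k) := fun k =>
    contDiff_nbr P hPs _ (smooth_snoc (smooth_snoc hFb ha) (hg k))
  have hCs : ∀ k, ContDiff ℝ (⊤ : ℕ∞) (C k) := fun k =>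
    contDiff_nbr P hPs _ (smooth_snoc (smooth_snoc hFb hb) (hg k))
  have da : ∀ y, DifferentiableAt ℝ a y := fun y => (ha.differentiable (by simp)) y
  have db : ∀ y, DifferentiableAt ℝ b y := fun y => (hb.differentiable (by simp)) y
  -- inner functions
  have hinner : ∀ k, nbr P (Fin.snoc (Fin.snoc Fb (fun y => a y * b y)) (g k))
      = fun y => a y * C k y + b y * A k y := by
    intro k; funext y
    rw [nbr_snoc_snoc, fderiv_fun_mul (da y) (db y), map_mid_two, ← nbr_snoc_snoc, ← nbr_snoc_snoc]
  -- LHS expansion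
  have hLHS : nbr P (Fin.snoc (Fin.snoc Fb (fun y => a y * b y)) (nbr P g)) x
      = a x * nbr P (Fin.snoc (Fin.snoc Fb b) (nbr P g)) x
        + b x * nbr P (Fin.snoc (Fin.snoc Fb a) (nbr P g)) x := by
    rw [nbr_snoc_snoc, fderiv_fun_mul (da x) (db x), map_mid_two, ← nbr_snoc_snoc, ← nbr_snoc_snoc]
  -- RHS expansion
  have hRHS : ∀ k, nbr P (Function.update g k (fun y => a y * C k y + b y * A k y)) x
      = a x * nbr P (Function.update g k (C k)) x
        + C k x * (P x) (Function.update dg k (fderiv ℝ a x))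
        + (b x * nbr P (Function.update g k (A k)) x
        + A k x * (P x) (Function.update dg k (fderiv ℝ b x))) := by
    intro k
    have hd : fderiv ℝ (fun y => a y * C k y + b y * A k y) x
        = a x • fderiv ℝ (C k) x + C k x • fderiv ℝ a x
          + (b x • fderiv ℝ (A k) x + A k x • fderiv ℝ b x) := by
      rw [fderiv_fun_add (f := fun y => a y * C k y) (g := fun y => b y * A k y) ((da x).mul ((hCs k).differentiable (by simp) x))
          ((db x).mul ((hAs k).differentiable (by simp) x)),
        fderiv_fun_mul (da x) ((hCs k).differentiable (by simp) x),
        fderiv_fun_mul (db x) ((hAs k).differentiable (by simp) x)]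
    have eC : nbr P (Function.update g k (C k)) x
        = (P x) (Function.update dg k (fderiv ℝ (C k) x)) := by
      rw [nbr, fderiv_update_fam]
    have eA : nbr P (Function.update g k (A k)) x
        = (P x) (Function.update dg k (fderiv ℝ (A k) x)) := by
      rw [nbr, fderiv_update_fam]
    rw [nbr, fderiv_update_fam, hd, map_update_four, eC, eA]
    ring
  -- the three instances of the fundamental identity
  have E1 := congrFun (hP (Fin.snoc Fb (fun y => a y * b y)) g
      (smooth_snoc hFb (ha.mul hb)) hg) x
  have E2 := congrFun (hP (Fin.snoc Fb b) g (smooth_snoc hFb hb) hg) x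
  have E3 := congrFun (hP (Fin.snoc Fb a) g (smooth_snoc hFb ha) hg) x
  rw [Finset.sum_apply] at E1 E2 E3
  simp only [hinner] at E1
  rw [hLHS] at E1
  simp only [hRHS] at E1
  rw [Finset.sum_add_distrib, Finset.sum_add_distrib, Finset.sum_add_distrib,
    ← Finset.mul_sum, ← Finset.mul_sum] at E1
  show ∑ k : Fin (m+2+1), (nbr P (Fin.snoc (Fin.snoc Fb a) (g k)) x
            * (P x) (Function.update dg k (fderiv ℝ b x))
        + nbr P (Fin.snoc (Fin.snoc Fb b) (g k)) x
            * (P x) (Function.update dg k (fderiv ℝ a x))) = 0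
  rw [Finset.sum_add_distrib]
  simp only [hA, hC] at E1
  linear_combination a x * E2 + b x * E3 - E1

theorem pointwise_FI {m : ℕ}
    (P : E → ((E →L[ℝ] ℝ) [⋀^Fin (m+3)]→ₗ[ℝ] ℝ))
    (hPs : SmoothNV P) (hP : IsNambu P) (x : E)
    (ν : Fin (m+1) → E →L[ℝ] ℝ) (δ γ : E →L[ℝ] ℝ) (B : Fin (m+3) → E →L[ℝ] ℝ) :
    ∑ k, ((P x) (Fin.snoc (Fin.snoc ν δ) (B k)) * (P x) (Function.update B k γ)
        + (P x) (Fin.snoc (Fin.snoc ν γ) (B k)) * (P x) (Function.update B k δ)) = 0 := by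
  have h := star_identity P hPs hP (fun i => ⇑(ν i)) δ γ (fun k => ⇑(B k))
    (fun i => (ν i).contDiff) δ.contDiff γ.contDiff (fun k => (B k).contDiff) x
  simp only [nbr_snoc_snoc, ContinuousLinearMap.fderiv] at h
  convert h using 2
end C

section ALG
variable {V : Type*} [AddCommGroup V] [Module ℝ V] {m : ℕ}

/-- kernel (radical relative to the frame β₀) -/
def NPIK (T : V [⋀^Fin (m+3)]→ₗ[ℝ] ℝ) (β₀ : Fin (m+3) → V) (x : V) : Prop :=
  ∀ k, T (Function.update β₀ k x) = 0

def NPGood (T : V [⋀^Fin (m+3)]→ₗ[ℝ] ℝ) (β₀ : Fin (m+3) → V) (x : V) : Prop :=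
  (∃ j, x = β₀ j) ∨ NPIK T β₀ x

theorem perm_zero (T : V [⋀^Fin (m+3)]→ₗ[ℝ] ℝ) (v : Fin (m+3) → V)
    (σ : Equiv.Perm (Fin (m+3))) (h : T (v ∘ σ) = 0) : T v = 0 := by
  have hp := T.map_perm v σ
  rcases Int.units_eq_one_or (Equiv.Perm.sign σ) with hs | hs <;> rw [hs] at hp <;>
    simp only [one_smul, Units.neg_smul] at hp
  · rw [← hp]; exact h
  · have : -T v = 0 := hp ▸ h
    linarith

theorem snoc_decomp (u : Fin (m+3) → V) :
    (Fin.snoc (Fin.snoc (fun i : Fin (m+1) => u i.castSucc.castSucc)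
      (u (Fin.last (m+1)).castSucc)) (u (Fin.last (m+2))) : Fin (m+3) → V) = u := by
  funext t
  refine Fin.lastCases ?_ (fun s => ?_) t
  · simp
  · refine Fin.lastCases ?_ (fun q => ?_) s
    · simp
    · simp

theorem NPIK_not_beta {T : V [⋀^Fin (m+3)]→ₗ[ℝ] ℝ} {β₀ : Fin (m+3) → V}
    (hc : T β₀ ≠ 0) (j : Fin (m+3)) : ¬ NPIK T β₀ (β₀ j) := by
  intro h
  have := h j
  rw [Function.update_eq_self] at this
  exact hc this

variable {T : V [⋀^Fin (m+3)]→ₗ[ℝ] ℝ} {β₀ : Fin (m+3) → V}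

/-- values with one K-slot (middle) and one frame slot (last) vanish -/
theorem K_beta_zero
    (hH : ∀ (ν : Fin (m+1) → V) (δ γ : V) (B : Fin (m+3) → V),
      ∑ k, (T (Fin.snoc (Fin.snoc ν δ) (B k)) * T (Function.update B k γ)
          + T (Fin.snoc (Fin.snoc ν γ) (B k)) * T (Function.update B k δ)) = 0)
    (hc : T β₀ ≠ 0)
    (ν : Fin (m+1) → V) (y : V) (hy : NPIK T β₀ y) (l : Fin (m+3)) :
    T (Fin.snoc (Fin.snoc ν y) (β₀ l)) = 0 := by
  have hy' : ∀ k, T (Function.update β₀ k y) = 0 := hy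
  have h := hH ν (β₀ l) y β₀
  simp only [hy', mul_zero, zero_add] at h
  rw [Finset.sum_eq_single l] at h
  · rw [Function.update_eq_self] at h
    rcases mul_eq_zero.1 h with h' | h'
    · exact h'
    · exact absurd h' hc
  · intro k _ hkl
    have hz : T (Function.update β₀ k (β₀ l)) = 0 := by
      refine T.map_eq_zero_of_eq _ (i := k) (j := l) ?_ hkl
      rw [Function.update_self, Function.update_of_ne (Ne.symm hkl)]
    rw [hz, mul_zero]
  · intro h'; exact absurd (Finset.mem_univ l) h'

/-- general mixed vanishing -/
theorem mixed_zero
    (hH : ∀ (ν : Fin (m+1) → V) (δ γ : V) (B : Fin (m+3) → V),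
      ∑ k, (T (Fin.snoc (Fin.snoc ν δ) (B k)) * T (Function.update B k γ)
          + T (Fin.snoc (Fin.snoc ν γ) (B k)) * T (Function.update B k δ)) = 0)
    (hc : T β₀ ≠ 0)
    (w : Fin (m+3) → V) (p q : Fin (m+3)) (hpq : p ≠ q)
    (hK : NPIK T β₀ (w p)) (hB : ∃ l, w q = β₀ l) : T w = 0 := by
  obtain ⟨l, hl⟩ := hB
  have h12 : ((Fin.last (m+1)).castSucc : Fin (m+3)) ≠ Fin.last (m+2) :=
    (Fin.castSucc_lt_last _).ne
  set i₁ : Fin (m+3) := (Fin.last (m+1)).castSucc with hi₁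
  set i₂ : Fin (m+3) := Fin.last (m+2) with hi₂
  set p' : Fin (m+3) := Equiv.swap q i₂ p with hp'def
  have hwp' : w (Equiv.swap q i₂ p') = w p := by rw [hp'def, Equiv.swap_apply_self]
  have hp'ne : p' ≠ i₂ := by
    rcases eq_or_ne p i₂ with rfl | hne
    · rw [hp'def, Equiv.swap_apply_right]; exact hpq.symm
    · rw [hp'def, Equiv.swap_apply_of_ne_of_ne hpq hne]; exact hne
  set σ : Equiv.Perm (Fin (m+3)) := (Equiv.swap p' i₁).trans (Equiv.swap q i₂) with hσ
  set v : Fin (m+3) → V := w ∘ σ with hv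
  have hv₁ : v i₁ = w p := by
    rw [hv]
    simp only [Function.comp_apply, hσ, Equiv.trans_apply, Equiv.swap_apply_right]
    exact hwp'
  have hv₂ : v i₂ = β₀ l := by
    rw [hv]
    simp only [Function.comp_apply, hσ, Equiv.trans_apply]
    rw [Equiv.swap_apply_of_ne_of_ne (Ne.symm hp'ne) (Ne.symm h12),
      Equiv.swap_apply_right, hl]
  apply perm_zero T w σ
  have hveq : (w ∘ σ : Fin (m+3) → V)
      = Fin.snoc (Fin.snoc (fun i : Fin (m+1) => v i.castSucc.castSucc) (v i₁)) (v i₂) :=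
    (snoc_decomp v).symm
  rw [hveq, hv₁, hv₂]
  exact K_beta_zero hH hc _ _ hK l

theorem allK_zero
    (hH : ∀ (ν : Fin (m+1) → V) (δ γ : V) (B : Fin (m+3) → V),
      ∑ k, (T (Fin.snoc (Fin.snoc ν δ) (B k)) * T (Function.update B k γ)
          + T (Fin.snoc (Fin.snoc ν γ) (B k)) * T (Function.update B k δ)) = 0)
    (hc : T β₀ ≠ 0)
    (y : Fin (m+3) → V) (hy : ∀ i, NPIK T β₀ (y i)) : T y = 0 := by
  have h := hH (fun i => β₀ i.castSucc.castSucc) (β₀ (Fin.last (m+1)).castSucc)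
    (y (Fin.last (m+2))) (Fin.snoc (Fin.init y) (β₀ (Fin.last (m+2))))
  have hothers : ∀ k ∈ Finset.univ, k ≠ Fin.last (m+2) →
      (T (Fin.snoc (Fin.snoc (fun i => β₀ i.castSucc.castSucc) (β₀ (Fin.last (m+1)).castSucc))
            (Fin.snoc (Fin.init y) (β₀ (Fin.last (m+2))) k))
          * T (Function.update (Fin.snoc (Fin.init y) (β₀ (Fin.last (m+2)))) k (y (Fin.last (m+2))))
        + T (Fin.snoc (Fin.snoc (fun i => β₀ i.castSucc.castSucc) (y (Fin.last (m+2))))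
            (Fin.snoc (Fin.init y) (β₀ (Fin.last (m+2))) k))
          * T (Function.update (Fin.snoc (Fin.init y) (β₀ (Fin.last (m+2)))) k
              (β₀ (Fin.last (m+1)).castSucc))) = 0 := by
    intro k _ hk
    obtain ⟨j, rfl⟩ : ∃ j : Fin (m+2), k = j.castSucc := by
      refine ⟨⟨k.1, ?_⟩, Fin.ext rfl⟩
      have h2 := k.2
      have h3 : (k : ℕ) ≠ m+2 := fun hh => hk (Fin.ext hh)
      omega
    have hBj : Fin.snoc (Fin.init y) (β₀ (Fin.last (m+2))) j.castSucc = y j.castSucc := by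
      rw [Fin.snoc_castSucc]; rfl
    have f1 : T (Fin.snoc (Fin.snoc (fun i => β₀ i.castSucc.castSucc)
        (β₀ (Fin.last (m+1)).castSucc))
        (Fin.snoc (Fin.init y) (β₀ (Fin.last (m+2))) j.castSucc)) = 0 := by
      refine mixed_zero hH hc _ (Fin.last (m+2)) ((0 : Fin (m+1)).castSucc.castSucc)
        (Fin.castSucc_lt_last _).ne' ?_ ?_
      · have e : (Fin.snoc (Fin.snoc (fun i => β₀ i.castSucc.castSucc)
            (β₀ (Fin.last (m+1)).castSucc))
            (Fin.snoc (Fin.init y) (β₀ (Fin.last (m+2))) j.castSucc) : Fin (m+3) → V)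
            (Fin.last (m+2)) = y j.castSucc := by
          rw [Fin.snoc_last, hBj]
        rw [e]; exact hy _
      · refine ⟨(0 : Fin (m+1)).castSucc.castSucc, ?_⟩
        rw [show ((0 : Fin (m+1)).castSucc.castSucc : Fin (m+3))
            = ((0 : Fin (m+1)).castSucc : Fin (m+2)).castSucc from rfl, Fin.snoc_castSucc,
          Fin.snoc_castSucc]
    have f2 : T (Function.update (Fin.snoc (Fin.init y) (β₀ (Fin.last (m+2)))) j.castSucc
        (β₀ (Fin.last (m+1)).castSucc)) = 0 := by
      obtain ⟨j', hj'⟩ := exists_ne j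
      refine mixed_zero hH hc _ j'.castSucc (Fin.last (m+2))
        (Fin.castSucc_lt_last _).ne ?_ ?_
      · have e : Function.update (Fin.snoc (Fin.init y) (β₀ (Fin.last (m+2)))) j.castSucc
            (β₀ (Fin.last (m+1)).castSucc) j'.castSucc = y j'.castSucc := by
          rw [Function.update_of_ne (by simpa [Fin.castSucc_inj] using hj'),
            Fin.snoc_castSucc]
          rfl
        rw [e]; exact hy _
      · refine ⟨Fin.last (m+2), ?_⟩
        rw [Function.update_of_ne (Fin.castSucc_lt_last _).ne', Fin.snoc_last]
    rw [f1, f2, zero_mul, mul_zero, add_zero]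
  rw [Finset.sum_eq_single_of_mem (Fin.last (m+2)) (Finset.mem_univ _) hothers] at h
  have e1 : Fin.snoc (Fin.init y) (β₀ (Fin.last (m+2))) (Fin.last (m+2)) = β₀ (Fin.last (m+2)) :=
    Fin.snoc_last _ _
  have e2 : (Fin.snoc (Fin.snoc (fun i => β₀ i.castSucc.castSucc)
      (β₀ (Fin.last (m+1)).castSucc))
      (Fin.snoc (Fin.init y) (β₀ (Fin.last (m+2))) (Fin.last (m+2))) : Fin (m+3) → V) = β₀ := by
    rw [e1]; exact snoc_decomp β₀
  have e3 : Function.update (Fin.snoc (Fin.init y) (β₀ (Fin.last (m+2)))) (Fin.last (m+2))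
      (y (Fin.last (m+2))) = y := by
    rw [Fin.update_snoc_last, Fin.snoc_init_self]
  have e4 : T (Fin.snoc (Fin.snoc (fun i => β₀ i.castSucc.castSucc) (y (Fin.last (m+2))))
      (Fin.snoc (Fin.init y) (β₀ (Fin.last (m+2))) (Fin.last (m+2)))) = 0 := by
    rw [e1]; exact K_beta_zero hH hc _ _ (hy _) _
  rw [e2, e3, e4, zero_mul, add_zero] at h
  rcases mul_eq_zero.1 h with h' | h'
  · exact absurd h' hc
  · exact h'

theorem LK_zero
    (hH : ∀ (ν : Fin (m+1) → V) (δ γ : V) (B : Fin (m+3) → V),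
      ∑ k, (T (Fin.snoc (Fin.snoc ν δ) (B k)) * T (Function.update B k γ)
          + T (Fin.snoc (Fin.snoc ν γ) (B k)) * T (Function.update B k δ)) = 0)
    (hc : T β₀ ≠ 0)
    (u : Fin (m+3) → V) (hu : ∀ i, NPGood T β₀ (u i)) (p : Fin (m+3))
    (hp : NPIK T β₀ (u p)) : T u = 0 := by
  by_cases hall : ∀ i, NPIK T β₀ (u i)
  · exact allK_zero hH hc u hall
  · push_neg at hall
    obtain ⟨q, hq⟩ := hall
    obtain ⟨l, hl⟩ := (hu q).resolve_right hq
    have hpq : p ≠ q := by rintro rfl; exact hq hp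
    exact mixed_zero hH hc u p q hpq hp ⟨l, hl⟩

theorem snoc_fin_inj {m : ℕ} {j : Fin (m+2) → Fin (m+3)} {j₂ : Fin (m+3)}
    (hjinj : Function.Injective j) (hd : ∀ p, j p ≠ j₂) :
    Function.Injective (Fin.snoc j j₂ : Fin (m+3) → Fin (m+3)) := by
  intro s t
  induction s using Fin.lastCases with
  | last =>
    induction t using Fin.lastCases with
    | last => intro _; rfl
    | cast pt =>
      intro hst
      rw [Fin.snoc_last, Fin.snoc_castSucc] at hst
      exact absurd hst.symm (hd pt)
  | cast ps =>
    induction t using Fin.lastCases with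
    | last =>
      intro hst
      rw [Fin.snoc_last, Fin.snoc_castSucc] at hst
      exact absurd hst (hd ps)
    | cast pt =>
      intro hst
      rw [Fin.snoc_castSucc, Fin.snoc_castSucc] at hst
      rw [hjinj hst]

theorem good_update {u : Fin (m+3) → V} (hu : ∀ i, NPGood T β₀ (u i)) (k : Fin (m+3)) {x : V}
    (hx : NPGood T β₀ x) : ∀ i, NPGood T β₀ (Function.update u k x i) := by
  intro i
  rcases eq_or_ne i k with rfl | h
  · rwa [Function.update_self]
  · rw [Function.update_of_ne h]; exact hu i

theorem ZG
    (hH : ∀ (ν : Fin (m+1) → V) (δ γ : V) (B : Fin (m+3) → V),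
      ∑ k, (T (Fin.snoc (Fin.snoc ν δ) (B k)) * T (Function.update B k γ)
          + T (Fin.snoc (Fin.snoc ν γ) (B k)) * T (Function.update B k δ)) = 0)
    (hc : T β₀ ≠ 0)
    (u B : Fin (m+3) → V) (hu : ∀ i, NPGood T β₀ (u i)) (hB : ∀ i, NPGood T β₀ (B i)) :
    T u * T B = ∑ k, T (Function.update u (Fin.last (m+2)) (B k))
      * T (Function.update B k (u (Fin.last (m+2)))) := by
  by_cases hA : ∃ p, p ≠ Fin.last (m+2) ∧ NPIK T β₀ (u p)
  · obtain ⟨p, hp2, hpK⟩ := hA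
    have hTu : T u = 0 := LK_zero hH hc u hu p hpK
    have hterm : ∀ k, T (Function.update u (Fin.last (m+2)) (B k)) = 0 := fun k =>
      LK_zero hH hc _ (good_update hu _ (hB k)) p
        (by rw [Function.update_of_ne hp2]; exact hpK)
    simp [hTu, hterm]
  · push_neg at hA
    have hpre : ∀ p : Fin (m+2), ∃ l, u p.castSucc = β₀ l := fun p =>
      (hu _).resolve_right (hA _ (Fin.castSucc_lt_last _).ne)
    choose j hj using hpre
    by_cases hγ : NPIK T β₀ (u (Fin.last (m+2)))
    · have hTu : T u = 0 := LK_zero hH hc u hu _ hγ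
      have hterm : ∀ k, T (Function.update B k (u (Fin.last (m+2)))) = 0 := fun k =>
        LK_zero hH hc _ (good_update hB _ (hu _)) k
          (by rw [Function.update_self]; exact hγ)
      simp [hTu, hterm]
    · obtain ⟨j₂, hj₂⟩ := (hu _).resolve_right hγ
      by_cases hjinj : Function.Injective j
      swap
      · obtain ⟨p, p', heq, hne⟩ := Function.not_injective_iff.1 hjinj
        have hupp : u p.castSucc = u p'.castSucc := by rw [hj, hj, heq]
        have hTu : T u = 0 := T.map_eq_zero_of_eq u hupp (by simpa [Fin.castSucc_inj] using hne)
        have hterm : ∀ k, T (Function.update u (Fin.last (m+2)) (B k)) = 0 := fun k =>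
          T.map_eq_zero_of_eq _ (i := p.castSucc) (j := p'.castSucc)
            (by rw [Function.update_of_ne (Fin.castSucc_lt_last _).ne,
              Function.update_of_ne (Fin.castSucc_lt_last _).ne]; exact hupp)
            (by simpa [Fin.castSucc_inj] using hne)
        simp [hTu, hterm]
      · by_cases hdup : ∃ p, j p = j₂
        · obtain ⟨p, hp⟩ := hdup
          have hudup : u p.castSucc = u (Fin.last (m+2)) := by rw [hj, hp, hj₂]
          have hTu : T u = 0 :=
            T.map_eq_zero_of_eq u hudup (Fin.castSucc_lt_last _).ne
          rw [hTu, zero_mul]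
          symm
          set τ : Equiv.Perm (Fin (m+3)) :=
            Equiv.swap (p.castSucc : Fin (m+3)) ((Fin.last (m+1)).castSucc) with hτ
          have hτlast : τ (Fin.last (m+2)) = Fin.last (m+2) :=
            Equiv.swap_apply_of_ne_of_ne (Fin.castSucc_lt_last _).ne' (Fin.castSucc_lt_last _).ne'
          have hτne : ∀ t, t ≠ Fin.last (m+2) → τ t ≠ Fin.last (m+2) := by
            intro t ht h
            exact ht (τ.injective (h.trans hτlast.symm))
          set ν : Fin (m+1) → V := fun q => u (τ q.castSucc.castSucc) with hν
          have hkey : ∀ x : V, (Function.update u (Fin.last (m+2)) x) ∘ τ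
              = Fin.snoc (Fin.snoc ν (β₀ j₂)) x := by
            intro x
            funext t
            refine Fin.lastCases ?_ (fun s => ?_) t
            · rw [Function.comp_apply, hτlast, Function.update_self, Fin.snoc_last]
            · rw [Function.comp_apply, Fin.snoc_castSucc]
              refine Fin.lastCases ?_ (fun q => ?_) s
              · have : τ (Fin.last (m+1)).castSucc = p.castSucc := Equiv.swap_apply_right _ _
                rw [this, Function.update_of_ne (Fin.castSucc_lt_last _).ne, hj, hp, Fin.snoc_last]
              · rw [Function.update_of_ne (hτne _ (Fin.castSucc_lt_last _).ne), Fin.snoc_castSucc]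
          have hsign : ∀ x : V, T (Fin.snoc (Fin.snoc ν (β₀ j₂)) x)
              = Equiv.Perm.sign τ • T (Function.update u (Fin.last (m+2)) x) := by
            intro x
            rw [← hkey x]
            exact T.map_perm _ τ
          have hHH := hH ν (β₀ j₂) (β₀ j₂) B
          rw [Finset.sum_add_distrib] at hHH
          have hY : ∑ k, T (Fin.snoc (Fin.snoc ν (β₀ j₂)) (B k))
              * T (Function.update B k (β₀ j₂)) = 0 := by linarith
          rw [hj₂]
          rcases Int.units_eq_one_or (Equiv.Perm.sign τ) with hs | hs
          · calc ∑ k, T (Function.update u (Fin.last (m+2)) (B k))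
                * T (Function.update B k (β₀ j₂))
                = ∑ k, T (Fin.snoc (Fin.snoc ν (β₀ j₂)) (B k))
                  * T (Function.update B k (β₀ j₂)) := by
                  refine Finset.sum_congr rfl fun k _ => ?_
                  rw [hsign (B k), hs, one_smul]
              _ = 0 := hY
          · calc ∑ k, T (Function.update u (Fin.last (m+2)) (B k))
                * T (Function.update B k (β₀ j₂))
                = ∑ k, -(T (Fin.snoc (Fin.snoc ν (β₀ j₂)) (B k))
                  * T (Function.update B k (β₀ j₂))) := by
                  refine Finset.sum_congr rfl fun k _ => ?_
                  rw [hsign (B k), hs]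
                  simp only [Units.neg_smul, one_smul]
                  ring
              _ = 0 := by rw [Finset.sum_neg_distrib, hY, neg_zero]
        · push_neg at hdup
          by_cases hBK : ∃ q, NPIK T β₀ (B q)
          · obtain ⟨q, hqK⟩ := hBK
            have hTB : T B = 0 := LK_zero hH hc B hB q hqK
            rw [hTB, mul_zero]
            symm
            apply Finset.sum_eq_zero
            intro k _
            rcases eq_or_ne k q with rfl | hkq
            · have h0 : T (Function.update u (Fin.last (m+2)) (B k)) = 0 :=
                LK_zero hH hc _ (good_update hu _ (hB k)) (Fin.last (m+2))
                  (by rw [Function.update_self]; exact hqK)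
              rw [h0, zero_mul]
            · have h0 : T (Function.update B k (u (Fin.last (m+2)))) = 0 :=
                LK_zero hH hc _ (good_update hB _ (hu _)) q
                  (by rw [Function.update_of_ne hkq.symm]; exact hqK)
              rw [h0, mul_zero]
          · push_neg at hBK
            have hBb : ∀ q, ∃ l, B q = β₀ l := fun q => (hB q).resolve_right (hBK q)
            choose mB hmB using hBb
            by_cases hminj : Function.Injective mB
            · have hmbij : Function.Bijective mB := Finite.injective_iff_bijective.1 hminj
              obtain ⟨k₀, hk₀⟩ := hmbij.2 j₂
              rw [Finset.sum_eq_single_of_mem k₀ (Finset.mem_univ k₀)]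
              · have e1 : Function.update u (Fin.last (m+2)) (B k₀) = u := by
                  rw [show B k₀ = u (Fin.last (m+2)) from by rw [hmB, hk₀, ← hj₂],
                    Function.update_eq_self]
                have e2 : Function.update B k₀ (u (Fin.last (m+2))) = B := by
                  rw [show u (Fin.last (m+2)) = B k₀ from by rw [hmB, hk₀, hj₂],
                    Function.update_eq_self]
                rw [e1, e2]
              · intro k _ hkk
                obtain ⟨t, ht⟩ :=
                  Finite.injective_iff_surjective.1 (snoc_fin_inj hjinj hdup) (mB k)
                have htne : t ≠ Fin.last (m+2) := by
                  rintro rfl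
                  rw [Fin.snoc_last] at ht
                  exact hkk (hminj (hk₀.trans ht)).symm
                obtain ⟨p, rfl⟩ : ∃ p : Fin (m+2), t = p.castSucc := by
                  refine ⟨⟨t.1, ?_⟩, Fin.ext rfl⟩
                  have h2 := t.2
                  have h3 : (t : ℕ) ≠ m+2 := fun hh => htne (Fin.ext hh)
                  omega
                rw [Fin.snoc_castSucc] at ht
                have h0 : T (Function.update u (Fin.last (m+2)) (B k)) = 0 := by
                  refine T.map_eq_zero_of_eq _ (i := p.castSucc) (j := Fin.last (m+2)) ?_
                    (Fin.castSucc_lt_last _).ne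
                  rw [Function.update_of_ne (Fin.castSucc_lt_last _).ne,
                    Function.update_self, hj, ht, hmB]
                rw [h0, zero_mul]
            · obtain ⟨q, q', heq, hne⟩ := Function.not_injective_iff.1 hminj
              have hBqq : B q = B q' := by rw [hmB, hmB, heq]
              have hTB : T B = 0 := T.map_eq_zero_of_eq B hBqq hne
              rw [hTB, mul_zero]
              symm
              have hout : ∀ k ∈ Finset.univ, k ∉ ({q, q'} : Finset (Fin (m+3))) →
                  T (Function.update u (Fin.last (m+2)) (B k))
                    * T (Function.update B k (u (Fin.last (m+2)))) = 0 := by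
                intro k _ hk
                simp only [Finset.mem_insert, Finset.mem_singleton, not_or] at hk
                have h0 : T (Function.update B k (u (Fin.last (m+2)))) = 0 := by
                  refine T.map_eq_zero_of_eq _ (i := q) (j := q') ?_ hne
                  rw [Function.update_of_ne (Ne.symm hk.1), Function.update_of_ne (Ne.symm hk.2)]
                  exact hBqq
                rw [h0, mul_zero]
              rw [← Finset.sum_subset (Finset.subset_univ ({q, q'} : Finset _)) hout,
                Finset.sum_pair hne]
              have h1 : T (Function.update u (Fin.last (m+2)) (B q'))
                  = T (Function.update u (Fin.last (m+2)) (B q)) := by rw [hBqq]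
              have h2 : T (Function.update B q' (u (Fin.last (m+2))))
                  = - T (Function.update B q (u (Fin.last (m+2)))) := by
                have hcomp : (Function.update B q (u (Fin.last (m+2)))) ∘ (Equiv.swap q q')
                    = Function.update B q' (u (Fin.last (m+2))) := by
                  funext t
                  rcases eq_or_ne t q with rfl | htq
                  · rw [Function.comp_apply, Equiv.swap_apply_left,
                      Function.update_of_ne hne.symm, Function.update_of_ne hne,
                      hBqq]
                  · rcases eq_or_ne t q' with rfl | htq'
                    · rw [Function.comp_apply, Equiv.swap_apply_right,
                        Function.update_self, Function.update_self]
                    · rw [Function.comp_apply, Equiv.swap_apply_of_ne_of_ne htq htq',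
                        Function.update_of_ne htq, Function.update_of_ne htq']
                have hmp := T.map_perm (Function.update B q (u (Fin.last (m+2)))) (Equiv.swap q q')
                rw [hcomp, Equiv.Perm.sign_swap hne] at hmp
                rw [hmp]
                simp only [Units.neg_smul, one_smul]
              rw [h1, h2]
              ring

noncomputable def prodML (T : V [⋀^Fin (m+3)]→ₗ[ℝ] ℝ) :
    MultilinearMap ℝ (fun _ : Fin (m+3) ⊕ Fin (m+3) => V) ℝ :=
  (TensorProduct.lid ℝ ℝ).toLinearMap.compMultilinearMap
    (T.toMultilinearMap.domCoprod T.toMultilinearMap)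

theorem prodML_apply (T : V [⋀^Fin (m+3)]→ₗ[ℝ] ℝ) (w : Fin (m+3) ⊕ Fin (m+3) → V) :
    prodML T w = T (fun i => w (Sum.inl i)) * T (fun i => w (Sum.inr i)) := by
  simp [prodML, MultilinearMap.domCoprod_apply, smul_eq_mul]

noncomputable def coefd (T : V [⋀^Fin (m+3)]→ₗ[ℝ] ℝ) (β₀ : Fin (m+3) → V)
    (x : V) (t : Fin (m+4)) : ℝ :=
  if h : (t : ℕ) < m+3 then (T β₀)⁻¹ * T (Function.update β₀ ⟨t, h⟩ x) else 1

noncomputable def vectd (T : V [⋀^Fin (m+3)]→ₗ[ℝ] ℝ) (β₀ : Fin (m+3) → V)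
    (x : V) (t : Fin (m+4)) : V :=
  if h : (t : ℕ) < m+3 then β₀ ⟨t, h⟩
  else x - ∑ k, ((T β₀)⁻¹ * T (Function.update β₀ k x)) • β₀ k

theorem vectd_good (hc : T β₀ ≠ 0) (x : V) (t : Fin (m+4)) :
    NPGood T β₀ (vectd T β₀ x t) := by
  rw [vectd]
  split
  · exact Or.inl ⟨_, rfl⟩
  · refine Or.inr (fun k' => ?_)
    change T.toMultilinearMap _ = 0
    rw [MultilinearMap.map_update_sub (f := T.toMultilinearMap)]
    rw [show T.toMultilinearMap (Function.update β₀ k' (∑ k, ((T β₀)⁻¹ * T (Function.update β₀ k x)) • β₀ k))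
        = ∑ k, T.toMultilinearMap (Function.update β₀ k' (((T β₀)⁻¹ * T (Function.update β₀ k x)) • β₀ k)) from
      T.toMultilinearMap.map_update_sum Finset.univ k' _ β₀]
    have : ∀ k, T.toMultilinearMap (Function.update β₀ k' (((T β₀)⁻¹ * T (Function.update β₀ k x)) • β₀ k))
        = ((T β₀)⁻¹ * T (Function.update β₀ k x)) * T (Function.update β₀ k' (β₀ k)) := by
      intro k
      rw [MultilinearMap.map_update_smul]
      rfl
    rw [Finset.sum_congr rfl fun k _ => this k]
    rw [Finset.sum_eq_single k']
    · rw [Function.update_eq_self]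
      show T (Function.update β₀ k' x) - (T β₀)⁻¹ * T (Function.update β₀ k' x) * T β₀ = 0
      field_simp
      ring
    · intro k _ hkk'
      have hz : T (Function.update β₀ k' (β₀ k)) = 0 := by
        refine T.map_eq_zero_of_eq _ (i := k') (j := k) ?_ (Ne.symm hkk')
        rw [Function.update_self, Function.update_of_ne hkk']
      rw [hz, mul_zero]
    · intro hk'; exact absurd (Finset.mem_univ k') hk'

theorem vectd_decomp (hc : T β₀ ≠ 0) (x : V) :
    x = ∑ t : Fin (m+4), coefd T β₀ x t • vectd T β₀ x t := by
  rw [Fin.sum_univ_castSucc]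
  have h1 : ∀ t : Fin (m+3), coefd T β₀ x t.castSucc • vectd T β₀ x t.castSucc
      = ((T β₀)⁻¹ * T (Function.update β₀ t x)) • β₀ t := by
    intro t
    rw [coefd, vectd]
    have ht : ((t.castSucc : Fin (m+4)) : ℕ) < m+3 := t.2
    rw [dif_pos ht, dif_pos ht]
    have he : (⟨((t.castSucc : Fin (m+4)) : ℕ), ht⟩ : Fin (m+3)) = t := Fin.ext rfl
    rw [he]
  have h2 : coefd T β₀ x (Fin.last (m+3)) • vectd T β₀ x (Fin.last (m+3))
      = x - ∑ k, ((T β₀)⁻¹ * T (Function.update β₀ k x)) • β₀ k := by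
    rw [coefd, vectd, dif_neg (by simp), dif_neg (by simp), one_smul]
  rw [Finset.sum_congr rfl fun t _ => h1 t, h2]
  abel

theorem comp_swap_inl (w : Fin (m+3) ⊕ Fin (m+3) → V) (k : Fin (m+3)) :
    (fun i => (w ∘ (Equiv.swap (Sum.inl (Fin.last (m+2))) (Sum.inr k))) (Sum.inl i))
      = Function.update (fun i => w (Sum.inl i)) (Fin.last (m+2)) (w (Sum.inr k)) := by
  funext i
  rcases eq_or_ne i (Fin.last (m+2)) with rfl | h
  · rw [Function.comp_apply, Equiv.swap_apply_left, Function.update_self]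
  · rw [Function.comp_apply,
      Equiv.swap_apply_of_ne_of_ne (fun hh => h (Sum.inl.inj hh)) (by simp),
      Function.update_of_ne h]

theorem comp_swap_inr (w : Fin (m+3) ⊕ Fin (m+3) → V) (k : Fin (m+3)) :
    (fun i => (w ∘ (Equiv.swap (Sum.inl (Fin.last (m+2))) (Sum.inr k))) (Sum.inr i))
      = Function.update (fun i => w (Sum.inr i)) k (w (Sum.inl (Fin.last (m+2)))) := by
  funext i
  rcases eq_or_ne i k with rfl | h
  · rw [Function.comp_apply, Equiv.swap_apply_right, Function.update_self]
  · rw [Function.comp_apply,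
      Equiv.swap_apply_of_ne_of_ne (by simp) (fun hh => h (Sum.inr.inj hh)),
      Function.update_of_ne h]

theorem alg_identity (T : V [⋀^Fin (m+3)]→ₗ[ℝ] ℝ)
    (hH : ∀ (ν : Fin (m+1) → V) (δ γ : V) (B : Fin (m+3) → V),
      ∑ k, (T (Fin.snoc (Fin.snoc ν δ) (B k)) * T (Function.update B k γ)
          + T (Fin.snoc (Fin.snoc ν γ) (B k)) * T (Function.update B k δ)) = 0)
    (α : Fin (m+2) → V) (γ : V) (B : Fin (m+3) → V) :
    T (Fin.snoc α γ) * T B = ∑ k, T (Fin.snoc α (B k)) * T (Function.update B k γ) := by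
  classical
  by_cases hT : ∀ v : Fin (m+3) → V, T v = 0
  · rw [hT, hT, zero_mul]
    symm; apply Finset.sum_eq_zero; intro k _; rw [hT, zero_mul]
  push_neg at hT
  obtain ⟨β₀, hc⟩ := hT
  have expand : ∀ v : Fin (m+3) ⊕ Fin (m+3) → V,
      prodML T v = ∑ r : (Fin (m+3) ⊕ Fin (m+3)) → Fin (m+4),
        (∏ i, coefd T β₀ (v i) (r i)) • prodML T (fun i => vectd T β₀ (v i) (r i)) := by
    intro v
    conv_lhs => rw [show v = fun i => ∑ t : Fin (m+4), coefd T β₀ (v i) t • vectd T β₀ (v i) t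
      from funext fun i => vectd_decomp hc (v i)]
    rw [(prodML T).map_sum_finset (fun i t => coefd T β₀ (v i) t • vectd T β₀ (v i) t)
      (fun _ => Finset.univ), Fintype.piFinset_univ]
    exact Finset.sum_congr rfl fun r _ => (prodML T).map_smul_univ _ _
  have hZG : ∀ s : Fin (m+3) ⊕ Fin (m+3) → V, (∀ i, NPGood T β₀ (s i)) →
      prodML T s = ∑ k, prodML T (s ∘ Equiv.swap (Sum.inl (Fin.last (m+2))) (Sum.inr k)) := by
    intro s hs
    rw [prodML_apply]
    rw [ZG hH hc (fun i => s (Sum.inl i)) (fun i => s (Sum.inr i))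
      (fun i => hs _) (fun i => hs _)]
    refine Finset.sum_congr rfl fun k _ => ?_
    rw [prodML_apply, comp_swap_inl, comp_swap_inr]
  have main : ∀ w : Fin (m+3) ⊕ Fin (m+3) → V,
      prodML T w = ∑ k, prodML T (w ∘ (Equiv.swap (Sum.inl (Fin.last (m+2))) (Sum.inr k))) := by
    intro w
    have hterm : ∀ k : Fin (m+3),
        prodML T (w ∘ (Equiv.swap (Sum.inl (Fin.last (m+2))) (Sum.inr k)))
        = ∑ r : (Fin (m+3) ⊕ Fin (m+3)) → Fin (m+4),
          (∏ i, coefd T β₀ (w i) (r i)) •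
            prodML T ((fun i => vectd T β₀ (w i) (r i))
              ∘ (Equiv.swap (Sum.inl (Fin.last (m+2))) (Sum.inr k))) := by
      intro k
      rw [expand (w ∘ (Equiv.swap (Sum.inl (Fin.last (m+2))) (Sum.inr k)))]
      set σ := Equiv.swap (Sum.inl (Fin.last (m+2)) : Fin (m+3) ⊕ Fin (m+3)) (Sum.inr k) with hσ
      refine Fintype.sum_equiv (Equiv.arrowCongr σ (Equiv.refl (Fin (m+4)))) _ _ ?_
      intro r
      have hcoef : ∏ i, coefd T β₀ ((w ∘ σ) i) (r i)
          = ∏ i, coefd T β₀ (w i) ((Equiv.arrowCongr σ (Equiv.refl (Fin (m+4)))) r i) := by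
        rw [← Equiv.prod_comp σ
          (fun i => coefd T β₀ (w i) ((Equiv.arrowCongr σ (Equiv.refl (Fin (m+4)))) r i))]
        refine Finset.prod_congr rfl fun i _ => ?_
        simp [Equiv.arrowCongr]
      have hvec : ((fun i => vectd T β₀ (w i) ((Equiv.arrowCongr σ (Equiv.refl (Fin (m+4)))) r i)) ∘ σ)
          = fun i => vectd T β₀ ((w ∘ σ) i) (r i) := by
        funext i
        simp [Equiv.arrowCongr]
      rw [hcoef, ← hvec]
    rw [expand w]
    rw [Finset.sum_congr rfl fun k (_ : k ∈ Finset.univ) => hterm k, Finset.sum_comm]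
    refine Finset.sum_congr rfl fun r _ => ?_
    rw [← Finset.smul_sum]
    congr 1
    exact hZG _ (fun i => vectd_good hc (w i) (r i))
  have h := main (Sum.elim (Fin.snoc α γ) B)
  have hL : prodML T (Sum.elim (Fin.snoc α γ) B) = T (Fin.snoc α γ) * T B := by
    rw [prodML_apply]; rfl
  have hR : ∀ k, prodML T ((Sum.elim (Fin.snoc α γ) B)
      ∘ (Equiv.swap (Sum.inl (Fin.last (m+2))) (Sum.inr k)))
      = T (Fin.snoc α (B k)) * T (Function.update B k γ) := by
    intro k
    rw [prodML_apply, comp_swap_inl, comp_swap_inr]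
    congr 2
    · rw [show (fun i => Sum.elim (Fin.snoc α γ) B (Sum.inl i)) = Fin.snoc α γ from rfl,
        show Sum.elim (Fin.snoc α γ) B (Sum.inr k) = B k from rfl,
        Fin.update_snoc_last]
    · have hg : Sum.elim (Fin.snoc α γ) B (Sum.inl (Fin.last (m+2))) = γ := by
        simp
      rw [show (fun i => Sum.elim (Fin.snoc α γ) B (Sum.inr i)) = B from rfl, hg]
  rw [hL, Finset.sum_congr rfl fun k _ => hR k] at h
  exact h

end ALG

section FinalHelpers
variable {E : Type*} [NormedAddCommGroup E] [NormedSpace ℝ E]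

theorem nbr_snoc {n : ℕ} (P : E → ((E →L[ℝ] ℝ) [⋀^Fin (n+1)]→ₗ[ℝ] ℝ))
    (F : Fin n → E → ℝ) (h : E → ℝ) (x : E) :
    nbr P (Fin.snoc F h) x
      = P x (Fin.snoc (fun i => fderiv ℝ (F i) x) (fderiv ℝ h x)) := by
  rw [nbr, fderiv_snoc F h x]

theorem map_last_two {V : Type*} [AddCommGroup V] [Module ℝ V] {n : ℕ}
    (T : V [⋀^Fin (n+1)]→ₗ[ℝ] ℝ) (F : Fin n → V) (c c' : ℝ) (u v : V) :
    T (Fin.snoc F (c • u + c' • v))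
      = c * T (Fin.snoc F u) + c' * T (Fin.snoc F v) := by
  rw [show (Fin.snoc F (c • u + c' • v) : Fin (n+1) → V)
      = Function.update (Fin.snoc F u) (Fin.last n) (c • u + c' • v) from
      (Fin.update_snoc_last _ _ _).symm,
    T.map_update_add, T.map_update_smul, T.map_update_smul,
    Fin.update_snoc_last, Fin.update_snoc_last]
  simp [smul_eq_mul]

theorem map_update_two {V : Type*} [AddCommGroup V] [Module ℝ V] {N : ℕ}
    (T : V [⋀^Fin N]→ₗ[ℝ] ℝ) (B : Fin N → V) (k : Fin N) (c c' : ℝ) (u v : V) :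
    T (Function.update B k (c • u + c' • v))
      = c * T (Function.update B k u) + c' * T (Function.update B k v) := by
  rw [T.map_update_add, T.map_update_smul, T.map_update_smul]
  simp [smul_eq_mul]

end FinalHelpers

/-- If `P` is a Nambu-Poisson tensor of order `n + 1 ≥ 3`, then `fP` is a
Nambu-Poisson tensor for every smooth function `f`. -/
theorem smul_nambu_is_nambu
    {E : Type*} [NormedAddCommGroup E] [NormedSpace ℝ E] [FiniteDimensional ℝ E]
    (n : ℕ) (hn : 2 ≤ n)
    (P : E → ((E →L[ℝ] ℝ) [⋀^Fin (n + 1)]→ₗ[ℝ] ℝ))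
    (hPs : SmoothNV P) (hP : IsNambu P)
    (f : E → ℝ) (hf : ContDiff ℝ (⊤ : ℕ∞) f) :
    IsNambu (fun x => f x • P x) := by
  obtain ⟨m, rfl⟩ : ∃ m, n = m + 2 := ⟨n - 2, by omega⟩
  intro F g hF hg
  have hnbr_smul : ∀ (h : Fin (m+3) → E → ℝ),
      nbr (fun y => f y • P y) h = fun y => f y * nbr P h y := by
    intro h; funext y; rw [nbr, nbr]; simp
  funext x
  rw [Finset.sum_apply]
  set Bf : E → ℝ := nbr P g with hBf
  set A : Fin (m+3) → E → ℝ := fun k => nbr P (Fin.snoc F (g k)) with hA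
  set dF : Fin (m+2) → E →L[ℝ] ℝ := fun i => fderiv ℝ (F i) x with hdF
  set dg : Fin (m+3) → E →L[ℝ] ℝ := fun i => fderiv ℝ (g i) x with hdg
  have hBfs : ContDiff ℝ (⊤ : ℕ∞) Bf := contDiff_nbr P hPs g hg
  have hAs : ∀ k, ContDiff ℝ (⊤ : ℕ∞) (A k) := fun k =>
    contDiff_nbr P hPs _ (smooth_snoc hF (hg k))
  have hfd : ∀ y, DifferentiableAt ℝ f y := fun y => (hf.differentiable (by simp)) y
  -- expand LHS
  have eL : nbr (fun y => f y • P y) (Fin.snoc F (nbr (fun y => f y • P y) g)) x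
      = f x * (f x * nbr P (Fin.snoc F Bf) x
        + Bf x * (P x) (Fin.snoc dF (fderiv ℝ f x))) := by
    rw [hnbr_smul g]
    rw [congrFun (hnbr_smul (Fin.snoc F (fun y => f y * Bf y))) x]
    congr 1
    rw [nbr_snoc, fderiv_fun_mul (hfd x) ((hBfs.differentiable (by simp)) x), map_last_two,
      ← nbr_snoc]
  -- expand RHS terms
  have eR : ∀ k, nbr (fun y => f y • P y)
        (Function.update g k (nbr (fun y => f y • P y) (Fin.snoc F (g k)))) x
      = f x * f x * nbr P (Function.update g k (A k)) x
        + f x * (A k x * (P x) (Function.update dg k (fderiv ℝ f x))) := by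
    intro k
    rw [hnbr_smul (Fin.snoc F (g k))]
    rw [congrFun (hnbr_smul (Function.update g k (fun y => f y * A k y))) x]
    have hexp : nbr P (Function.update g k (fun y => f y * A k y)) x
        = f x * nbr P (Function.update g k (A k)) x
          + A k x * (P x) (Function.update dg k (fderiv ℝ f x)) := by
      rw [nbr, fderiv_update_fam, fderiv_fun_mul (hfd x) (((hAs k).differentiable (by simp)) x),
        map_update_two]
      congr 2
      rw [nbr, fderiv_update_fam]
    rw [hexp]
    ring
  rw [eL, Finset.sum_congr rfl fun k (_ : k ∈ Finset.univ) => eR k,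
    Finset.sum_add_distrib, ← Finset.mul_sum, ← Finset.mul_sum]
  -- fundamental identity for P
  have E1 := congrFun (hP F g hF hg) x
  rw [Finset.sum_apply] at E1
  -- algebraic identity at x
  have E2 := alg_identity (P x) (pointwise_FI P hPs hP x) dF (fderiv ℝ f x) dg
  have cA : ∀ k, (P x) (Fin.snoc dF (dg k)) = A k x := by
    intro k
    exact (nbr_snoc P F (g k) x).symm
  have cB : (P x) dg = Bf x := rfl
  rw [Finset.sum_congr rfl fun k (_ : k ∈ Finset.univ) => by rw [cA k]] at E2
  rw [cB] at E2
  -- combine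
  show f x * (f x * nbr P (Fin.snoc F Bf) x + Bf x * (P x) (Fin.snoc dF (fderiv ℝ f x)))
    = f x * f x * ∑ k, nbr P (Function.update g k (A k)) x
      + f x * ∑ k, A k x * (P x) (Function.update dg k (fderiv ℝ f x))
  linear_combination (f x * f x) * E1 + f x * E2
end

section
/- If a Nambu-Poisson bracket of order n ≥ 3 satisfies fP is Nambu-Poisson for all f, then for all functions f_1,...,f_{n-1}, f, g_1,...,g_n: {f_1,...,f_{n-1},f}{g_1,...,g_n} = Σ_{h=1}^n {g_1,...,g_{h-1},f,g_{h+1},...,g_n}{f_1,...,f_{n-1},g_h}. -/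
section Aux
variable {E : Type*} [NormedAddCommGroup E] [NormedSpace ℝ E] {n : ℕ}

lemma nbr_smul (f : E → ℝ) (P : E → ((E →L[ℝ] ℝ) [⋀^Fin n]→ₗ[ℝ] ℝ))
    (g : Fin n → E → ℝ) (x : E) :
    nbr (fun y => f y • P y) g x = f x * nbr P g x := rfl

lemma fderiv_fam_update {m : ℕ} (g : Fin m → E → ℝ) (k : Fin m) (u : E → ℝ) (x : E) :
    (fun i => fderiv ℝ (Function.update g k u i) x) =
      Function.update (fun i => fderiv ℝ (g i) x) k (fderiv ℝ u x) := by
  funext i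
  rcases eq_or_ne i k with h | h
  · subst h; simp
  · simp [Function.update_of_ne h]

lemma fderiv_fam_snoc (F : Fin n → E → ℝ) (u : E → ℝ) (x : E) :
    (fun i => fderiv ℝ ((Fin.snoc F u : Fin (n+1) → E → ℝ) i) x) =
      Fin.snoc (fun i => fderiv ℝ (F i) x) (fderiv ℝ u x) := by
  funext i
  refine Fin.lastCases ?_ (fun j => ?_) i <;> simp

lemma nbr_update_mul {m : ℕ} (P : E → ((E →L[ℝ] ℝ) [⋀^Fin m]→ₗ[ℝ] ℝ))
    (g : Fin m → E → ℝ) (k : Fin m) (f u : E → ℝ) (x : E)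
    (hf : DifferentiableAt ℝ f x) (hu : DifferentiableAt ℝ u x) :
    nbr P (Function.update g k (fun y => f y * u y)) x
      = f x * nbr P (Function.update g k u) x + u x * nbr P (Function.update g k f) x := by
  simp only [nbr, fderiv_fam_update]
  rw [fderiv_fun_mul hf hu, AlternatingMap.map_update_add, AlternatingMap.map_update_smul,
    AlternatingMap.map_update_smul]
  simp

lemma nbr_snoc_mul (P : E → ((E →L[ℝ] ℝ) [⋀^Fin (n+1)]→ₗ[ℝ] ℝ))
    (F : Fin n → E → ℝ) (f u : E → ℝ) (x : E)
    (hf : DifferentiableAt ℝ f x) (hu : DifferentiableAt ℝ u x) :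
    nbr P (Fin.snoc F (fun y => f y * u y)) x
      = f x * nbr P (Fin.snoc F u) x + u x * nbr P (Fin.snoc F f) x := by
  have h1 : (Fin.snoc F (fun y => f y * u y) : Fin (n+1) → E → ℝ) =
      Function.update (Fin.snoc F f) (Fin.last n) (fun y => f y * u y) :=
    (Fin.update_snoc_last (α := fun _ : Fin (n+1) => E → ℝ) f F _).symm
  have h2 : (Fin.snoc F u : Fin (n+1) → E → ℝ) = Function.update (Fin.snoc F f) (Fin.last n) u :=
    (Fin.update_snoc_last (α := fun _ : Fin (n+1) => E → ℝ) f F u).symm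
  have h3 : (Fin.snoc F f : Fin (n+1) → E → ℝ) = Function.update (Fin.snoc F f) (Fin.last n) f :=
    (Fin.update_snoc_last (α := fun _ : Fin (n+1) => E → ℝ) f F f).symm
  rw [h1, nbr_update_mul P _ _ f u x hf hu, ← h2, ← h3]

lemma nbr_congr_fderiv {m : ℕ} (P : E → ((E →L[ℝ] ℝ) [⋀^Fin m]→ₗ[ℝ] ℝ))
    {u v : Fin m → E → ℝ} {x : E} (h : ∀ i, fderiv ℝ (u i) x = fderiv ℝ (v i) x) :
    nbr P u x = nbr P v x := by
  simp only [nbr]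
  exact congrArg _ (funext h)

lemma contDiff_snoc_fam {F : Fin n → E → ℝ} {u : E → ℝ}
    (hF : ∀ i, ContDiff ℝ (⊤ : ℕ∞) (F i)) (hu : ContDiff ℝ (⊤ : ℕ∞) u) :
    ∀ i, ContDiff ℝ (⊤ : ℕ∞) ((Fin.snoc F u : Fin (n+1) → E → ℝ) i) := by
  intro i
  refine Fin.lastCases ?_ (fun j => ?_) i
  · simpa using hu
  · simpa using hF j

lemma nbr_contDiff [FiniteDimensional ℝ E]
    (P : E → ((E →L[ℝ] ℝ) [⋀^Fin n]→ₗ[ℝ] ℝ)) (hPs : SmoothNV P)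
    (g : Fin n → E → ℝ) (hg : ∀ i, ContDiff ℝ (⊤ : ℕ∞) (g i)) :
    ContDiff ℝ (⊤ : ℕ∞) (nbr P g) := by
  classical
  set d := Module.finrank ℝ E with hd
  let b : Module.Basis (Fin d) ℝ E := Module.finBasis ℝ E
  let ε : Fin d → (E →L[ℝ] ℝ) := fun j => LinearMap.toContinuousLinearMap (b.coord j)
  have hα : ∀ α : E →L[ℝ] ℝ, α = ∑ j, α (b j) • ε j := by
    intro α
    ext y
    conv_lhs => rw [← b.sum_repr y]
    rw [map_sum]
    simp [ε, Module.Basis.coord_apply, mul_comm]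
  have key : nbr P g = fun x =>
      ∑ r : Fin n → Fin d, (∏ i, fderiv ℝ (g i) x (b (r i))) * P x (fun i => ε (r i)) := by
    funext x
    have h1 : nbr P g x = P x (fun i => ∑ j, (fderiv ℝ (g i) x (b j)) • ε j) := by
      unfold nbr; congr 1; funext i; exact hα _
    rw [h1]
    have h2 := (P x).toMultilinearMap.map_sum
      (g := fun i j => (fderiv ℝ (g i) x (b j)) • ε j)
    simp only [AlternatingMap.coe_multilinearMap] at h2
    rw [h2]
    refine Finset.sum_congr rfl fun r _ => ?_
    have h3 := (P x).toMultilinearMap.map_smul_univ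
      (fun i => fderiv ℝ (g i) x (b (r i))) (fun i => ε (r i))
    simp only [AlternatingMap.coe_multilinearMap] at h3
    rw [h3, smul_eq_mul]
  rw [key]
  refine ContDiff.sum fun r _ => ContDiff.mul ?_ (hPs fun i => ε (r i))
  refine contDiff_prod fun i _ => ?_
  exact (ContinuousLinearMap.apply ℝ ℝ (b (r i))).contDiff.comp
    ((hg i).fderiv_right (by simp))

end Aux

/-- If the bracket of a Nambu-Poisson tensor `P` of order `n + 1 ≥ 3`
satisfies that `fP` is Nambu-Poisson for all smooth `f`, then identity (2.7'') holds:
`{F₁,…,Fₙ,f}{g₁,…,g_{n+1}} = Σ_h {g₁,…,g_{h-1},f,g_{h+1},…,g_{n+1}}{F₁,…,Fₙ,gₕ}`. -/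
theorem quadratic_identity_for_functions
    {E : Type*} [NormedAddCommGroup E] [NormedSpace ℝ E] [FiniteDimensional ℝ E]
    (n : ℕ) (hn : 2 ≤ n)
    (P : E → ((E →L[ℝ] ℝ) [⋀^Fin (n + 1)]→ₗ[ℝ] ℝ))
    (hPs : SmoothNV P) (hP : IsNambu P)
    (hfP : ∀ f : E → ℝ, ContDiff ℝ (⊤ : ℕ∞) f → IsNambu (fun x => f x • P x))
    (F : Fin n → E → ℝ) (f : E → ℝ) (g : Fin (n + 1) → E → ℝ)
    (hF : ∀ i, ContDiff ℝ (⊤ : ℕ∞) (F i)) (hf : ContDiff ℝ (⊤ : ℕ∞) f)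
    (hg : ∀ i, ContDiff ℝ (⊤ : ℕ∞) (g i)) (x : E) :
    nbr P (Fin.snoc F f) x * nbr P g x =
      ∑ h : Fin (n + 1),
        nbr P (Function.update g h f) x * nbr P (Fin.snoc F (g h)) x := by
  classical
  set f₀ : E → ℝ := fun y => 1 + (fderiv ℝ f x) (y - x) with hf₀def
  have hf₀ : ContDiff ℝ (⊤ : ℕ∞) f₀ :=
    contDiff_const.add ((fderiv ℝ f x).contDiff.comp (contDiff_id.sub contDiff_const))
  have hf₀x : f₀ x = 1 := by simp [hf₀def]
  have hdf₀ : fderiv ℝ f₀ x = fderiv ℝ f x := by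
    have hfe : f₀ = fun y => 1 + ((fderiv ℝ f x) y - (fderiv ℝ f x) x) := by
      funext y; simp [hf₀def, map_sub]
    rw [hfe]
    exact ((((fderiv ℝ f x).hasFDerivAt).sub_const ((fderiv ℝ f x) x)).const_add 1).fderiv
  have df₀ : DifferentiableAt ℝ f₀ x := (hf₀.differentiable (by simp)) x
  have hC : ContDiff ℝ (⊤ : ℕ∞) (nbr P g) := nbr_contDiff P hPs g hg
  have hB : ∀ k, ContDiff ℝ (⊤ : ℕ∞) (nbr P (Fin.snoc F (g k))) :=
    fun k => nbr_contDiff P hPs _ (contDiff_snoc_fam hF (hg k))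
  -- the identity from (f₀ • P) being Nambu-Poisson
  have H := congrFun (hfP f₀ hf₀ F g hF hg) x
  have eQg : nbr (fun y => f₀ y • P y) g = fun y => f₀ y * nbr P g y := by
    funext y; simp [nbr]
  have eQB : ∀ k, nbr (fun y => f₀ y • P y) (Fin.snoc F (g k))
      = fun y => f₀ y * nbr P (Fin.snoc F (g k)) y := by
    intro k; funext y; simp [nbr]
  simp only [Finset.sum_apply, eQg, eQB, nbr_smul] at H
  rw [nbr_snoc_mul P F f₀ (nbr P g) x df₀ ((hC.differentiable (by simp)) x)] at H
  have Hk : ∀ k : Fin (n+1), nbr P (Function.update g k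
        (fun y => f₀ y * nbr P (Fin.snoc F (g k)) y)) x
      = f₀ x * nbr P (Function.update g k (nbr P (Fin.snoc F (g k)))) x
        + nbr P (Fin.snoc F (g k)) x * nbr P (Function.update g k f₀) x :=
    fun k => nbr_update_mul P g k f₀ _ x df₀ (((hB k).differentiable (by simp)) x)
  simp only [Hk, hf₀x, one_mul] at H
  rw [Finset.sum_add_distrib] at H
  have H0 := congrFun (hP F g hF hg) x
  simp only [Finset.sum_apply] at H0
  rw [H0] at H
  have key := add_left_cancel H
  -- replace f₀ by f using equality of derivatives at x
  have hD : nbr P (Fin.snoc F f₀) x = nbr P (Fin.snoc F f) x := by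
    refine nbr_congr_fderiv P fun i => ?_
    refine Fin.lastCases ?_ (fun j => ?_) i
    · simpa using hdf₀
    · simp
  have hE : ∀ k : Fin (n+1), nbr P (Function.update g k f₀) x
      = nbr P (Function.update g k f) x := by
    intro k
    refine nbr_congr_fderiv P fun i => ?_
    rcases eq_or_ne i k with h | h
    · subst h; simpa using hdf₀
    · simp [Function.update_of_ne h]
  rw [hD] at key
  simp only [hE] at key
  rw [mul_comm]
  rw [key]
  exact Finset.sum_congr rfl fun k _ => mul_comm _ _
end

section
/- Let P_1, P_2 be nonzero decomposable n-vectors in a finite-dimensional vector space V such that P_1 + P_2 is also decomposable, and let D_1, D_2 be the subspaces spanned by the factors of P_1 and P_2 respectively. Then dim(D_1 ∩ D_2) ≥ n - 1. -/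
open ExteriorAlgebra

/-- The decomposable element `v₁ ∧ … ∧ vₙ` of the exterior algebra of `V`. -/
noncomputable def wedgeList {V : Type*} [AddCommGroup V] [Module ℝ V]
    {n : ℕ} (v : Fin n → V) : ExteriorAlgebra ℝ V :=
  (List.ofFn fun i => ι ℝ (v i)).prod

section Aux

variable {V : Type*} [AddCommGroup V] [Module ℝ V]

lemma wedgeList_eq_iMulti {n : ℕ} (v : Fin n → V) : wedgeList v = ιMulti ℝ n v :=
  (ιMulti_apply v).symm

lemma wedgeList_cons {n : ℕ} (x : V) (v : Fin n → V) :
    wedgeList (Fin.cons x v) = ι ℝ x * wedgeList v := by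
  unfold wedgeList
  rw [List.ofFn_succ]
  simp [Fin.cons]

lemma wedgeList_eq_zero_of_not_li {n : ℕ} {v : Fin n → V}
    (h : ¬ LinearIndependent ℝ v) : wedgeList v = 0 := by
  rw [wedgeList_eq_iMulti]
  exact AlternatingMap.map_linearDependent _ _ h

lemma li_of_wedgeList_ne_zero {n : ℕ} {v : Fin n → V}
    (h : wedgeList v ≠ 0) : LinearIndependent ℝ v := by
  by_contra hc
  exact h (wedgeList_eq_zero_of_not_li hc)

lemma wedgeList_ne_zero_of_li {n : ℕ} {v : Fin n → V}
    (hv : LinearIndependent ℝ v) : wedgeList v ≠ 0 := by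
  classical
  -- construct coordinate functionals
  let b : Module.Basis (Fin n) ℝ (Submodule.span ℝ (Set.range v)) := Module.Basis.span hv
  obtain ⟨q, hq⟩ := Submodule.exists_isCompl (Submodule.span ℝ (Set.range v))
  let π : V →ₗ[ℝ] Submodule.span ℝ (Set.range v) :=
    (Submodule.projectionOnto _ q hq)
  let φ : V →ₗ[ℝ] (Fin n → ℝ) :=
    (Finsupp.linearEquivFunOnFinite ℝ ℝ (Fin n)).toLinearMap.comp
      ((b.repr.toLinearMap).comp π)
  have hφ : ∀ i, φ (v i) = fun j => if i = j then (1:ℝ) else 0 := by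
    intro i
    have hmem : v i ∈ Submodule.span ℝ (Set.range v) :=
      Submodule.subset_span ⟨i, rfl⟩
    have hπ : π (v i) = ⟨v i, hmem⟩ :=
      Submodule.projectionOnto_apply_left hq ⟨v i, hmem⟩
    have hb : (⟨v i, hmem⟩ : Submodule.span ℝ (Set.range v)) = b i := by
      apply Subtype.ext
      simp [b, Module.Basis.span_apply]
    simp only [φ, LinearMap.comp_apply, hπ, hb, LinearEquiv.coe_toLinearMap]
    rw [b.repr_self]
    ext j
    simp [Finsupp.single_apply]
  let A : V [⋀^Fin n]→ₗ[ℝ] ℝ :=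
    (Matrix.detRowAlternating : (Fin n → ℝ) [⋀^Fin n]→ₗ[ℝ] ℝ).compLinearMap φ
  have hA : A v = 1 := by
    have h1 : (fun i => φ (v i)) = (1 : Matrix (Fin n) (Fin n) ℝ) := by
      funext i j
      rw [hφ i]
      simp [Matrix.one_apply]
    show Matrix.det (Matrix.of fun i => φ (v i)) = 1
    rw [show (Matrix.of fun i => φ (v i)) = 1 from h1]
    exact Matrix.det_one
  intro h0
  have := congrArg (liftAlternating (R := ℝ) (M := V) (N := ℝ) (Function.update 0 n A)) h0
  rw [wedgeList_eq_iMulti, liftAlternating_apply_ιMulti, Function.update_self, hA] at this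
  simp at this

lemma mul_wedgeList_eq_zero_of_mem {n : ℕ} {v : Fin n → V} {x : V}
    (hx : x ∈ Submodule.span ℝ (Set.range v)) : ι ℝ x * wedgeList v = 0 := by
  rw [← wedgeList_cons]
  apply wedgeList_eq_zero_of_not_li
  intro h
  exact (linearIndependent_fin_cons.mp h).2 hx

lemma mem_of_mul_wedgeList_eq_zero {n : ℕ} {v : Fin n → V} {x : V}
    (h : wedgeList v ≠ 0) (hx : ι ℝ x * wedgeList v = 0) :
    x ∈ Submodule.span ℝ (Set.range v) := by
  by_contra hc
  have hcons : LinearIndependent ℝ (Fin.cons x v) :=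
    linearIndependent_fin_cons.mpr ⟨li_of_wedgeList_ne_zero h, hc⟩
  have hne := wedgeList_ne_zero_of_li hcons
  rw [wedgeList_cons] at hne
  exact hne hx

end Aux

/-- If `P₁ = v₁ ∧ … ∧ vₙ` and `P₂ = w₁ ∧ … ∧ wₙ` are nonzero decomposable
`n`-vectors whose sum `P₁ + P₂` is also decomposable, and `D₁`, `D₂` are the subspaces
spanned by their factors, then `dim (D₁ ⊓ D₂) ≥ n − 1`. -/
theorem decomposable_sum_intersection
    {V : Type*} [AddCommGroup V] [Module ℝ V] [FiniteDimensional ℝ V]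
    (n : ℕ) (v w : Fin n → V)
    (h1 : wedgeList v ≠ 0) (h2 : wedgeList w ≠ 0)
    (hsum : ∃ u : Fin n → V, wedgeList v + wedgeList w = wedgeList u) :
    n - 1 ≤ Module.finrank ℝ
      ↥(Submodule.span ℝ (Set.range v) ⊓ Submodule.span ℝ (Set.range w)) := by
  classical
  obtain ⟨u, hu⟩ := hsum
  set D₁ := Submodule.span ℝ (Set.range v) with hD₁
  set D₂ := Submodule.span ℝ (Set.range w) with hD₂
  have hv : LinearIndependent ℝ v := li_of_wedgeList_ne_zero h1
  have hw : LinearIndependent ℝ w := li_of_wedgeList_ne_zero h2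
  have hrank1 : Module.finrank ℝ D₁ = n := by
    rw [hD₁, finrank_span_eq_card hv, Fintype.card_fin]
  have hrank2 : Module.finrank ℝ D₂ = n := by
    rw [hD₂, finrank_span_eq_card hw, Fintype.card_fin]
  -- helper: D₁ ≤ D₂ suffices
  have le_case : D₁ ≤ D₂ → n - 1 ≤ Module.finrank ℝ ↥(D₁ ⊓ D₂) := by
    intro hle
    rw [inf_eq_left.mpr hle, hrank1]
    omega
  by_cases hP : wedgeList u = 0
  · -- P₁ = -P₂ : then D₁ ≤ D₂
    apply le_case
    intro x hx
    have h0 : ι ℝ x * wedgeList v = 0 := mul_wedgeList_eq_zero_of_mem hx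
    have hxw : ι ℝ x * wedgeList w = 0 := by
      have h' := congrArg (fun y => ι ℝ x * y) hu
      simp only [mul_add, hP, mul_zero, h0, zero_add] at h'
      exact h'
    exact mem_of_mul_wedgeList_eq_zero h2 hxw
  · have hui : LinearIndependent ℝ u := li_of_wedgeList_ne_zero hP
    set D := Submodule.span ℝ (Set.range u) with hDdef
    have hrankD : Module.finrank ℝ D = n := by
      rw [hDdef, finrank_span_eq_card hui, Fintype.card_fin]
    by_cases hDle : D ≤ D₁
    · -- D = D₁, then D₁ ≤ D₂
      apply le_case
      intro x hx
      have hxD : x ∈ D := by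
        have hDeq : D = D₁ :=
          Submodule.eq_of_le_of_finrank_le hDle (by rw [hrank1, hrankD])
        rw [hDeq]; exact hx
      have h0 : ι ℝ x * wedgeList v = 0 := mul_wedgeList_eq_zero_of_mem hx
      have hP0 : ι ℝ x * wedgeList u = 0 := mul_wedgeList_eq_zero_of_mem hxD
      have hxw : ι ℝ x * wedgeList w = 0 := by
        have h' := congrArg (fun y => ι ℝ x * y) hu
        simp only [mul_add, hP0, h0, zero_add] at h'
        exact h'
      exact mem_of_mul_wedgeList_eq_zero h2 hxw
    · -- get x ∈ D, x ∉ D₁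
      obtain ⟨x, hxD, hxD₁⟩ := SetLike.not_le_iff_exists.mp hDle
      have hQv : LinearIndependent ℝ (Fin.cons x v) :=
        linearIndependent_fin_cons.mpr ⟨hv, hxD₁⟩
      have hQne : wedgeList (Fin.cons x v) ≠ 0 := wedgeList_ne_zero_of_li hQv
      have hPx : ι ℝ x * wedgeList u = 0 := mul_wedgeList_eq_zero_of_mem hxD
      have hQeq : wedgeList (Fin.cons x w) = - wedgeList (Fin.cons x v) := by
        rw [wedgeList_cons, wedgeList_cons]
        have h' := congrArg (fun y => ι ℝ x * y) hu
        simp only [mul_add, hPx] at h'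
        rw [eq_neg_iff_add_eq_zero, add_comm]
        exact h'
      -- E := span (cons x v); dim E = n + 1; D₁ ⊔ D₂ ≤ E
      set E := Submodule.span ℝ (Set.range (Fin.cons x v)) with hEdef
      have hrankE : Module.finrank ℝ E = n + 1 := by
        rw [hEdef, finrank_span_eq_card hQv, Fintype.card_fin]
      have hD1E : D₁ ≤ E := by
        rw [hD₁, hEdef]
        apply Submodule.span_mono
        rintro _ ⟨i, rfl⟩
        exact ⟨i.succ, by simp⟩
      have hD2E : D₂ ≤ E := by
        rw [hD₂]
        rw [Submodule.span_le]
        rintro _ ⟨i, rfl⟩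
        -- w i ∈ span (cons x w) ≤ E
        have hmem : w i ∈ Submodule.span ℝ (Set.range (Fin.cons x w)) :=
          Submodule.subset_span ⟨i.succ, by simp⟩
        have hz : ι ℝ (w i) * wedgeList (Fin.cons x w) = 0 :=
          mul_wedgeList_eq_zero_of_mem hmem
        rw [hQeq, mul_neg, neg_eq_zero] at hz
        exact mem_of_mul_wedgeList_eq_zero hQne hz
      have hsupE : Module.finrank ℝ ↥(D₁ ⊔ D₂) ≤ n + 1 := by
        calc Module.finrank ℝ ↥(D₁ ⊔ D₂) ≤ Module.finrank ℝ E :=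
              Submodule.finrank_mono (sup_le hD1E hD2E)
          _ = n + 1 := hrankE
      have hdim := Submodule.finrank_sup_add_finrank_inf_eq D₁ D₂
      rw [hrank1, hrank2] at hdim
      omega
end

section
/- Let {P_α}_{α∈A} be a family of nonzero decomposable n-vectors in a finite-dimensional vector space V such that every pairwise sum P_{α_1} + P_{α_2} is decomposable, and let D_α be the n-dimensional subspaces spanned by their factors. Then either dim(∩_{α∈A} D_α) ≥ n - 1 or dim(Σ_{α∈A} D_α) ≤ n + 1. -/
open ExteriorAlgebra

open Submodule Set Module

section Aux

variable {V : Type*} [AddCommGroup V] [Module ℝ V] [FiniteDimensional ℝ V]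

/-- The wedge of a linearly independent family is nonzero. -/
lemma iMulti_ne_zero {k : ℕ} {z : Fin k → V} (hz : LinearIndependent ℝ z) :
    ιMulti ℝ k z ≠ 0 := by
  classical
  obtain ⟨C, hC⟩ := Submodule.exists_isCompl (span ℝ (range z))
  set b : Basis (Fin k) ℝ (span ℝ (range z)) := Basis.span hz with hb
  set f : V [⋀^Fin k]→ₗ[ℝ] ℝ :=
    b.det.compLinearMap (Submodule.projectionOnto _ _ hC) with hf
  have hfz : f z = 1 := by
    have hfun : (fun i => (Submodule.projectionOnto _ _ hC) (z i)) = ⇑b := by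
      funext i
      have hmem : z i ∈ span ℝ (range z) := subset_span (mem_range_self i)
      have h1 := Submodule.linearProjOfIsCompl_apply_left hC ⟨z i, hmem⟩
      have h2 : (b i : V) = z i := congrArg Subtype.val (Basis.span_apply hz i)
      apply Subtype.ext
      rw [show z i = ((⟨z i, hmem⟩ : span ℝ (range z)) : V) from rfl, h1, h2]
    show b.det (fun i => (Submodule.projectionOnto _ _ hC) (z i)) = 1
    rw [hfun, Basis.det_self]
  intro h
  have key : liftAlternating (R := ℝ)
      (Function.update (0 : ∀ i, V [⋀^Fin i]→ₗ[ℝ] ℝ) k f) (ιMulti ℝ k z) = f z := by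
    rw [liftAlternating_apply_ιMulti, Function.update_self]
  rw [h, map_zero, hfz] at key
  exact zero_ne_one key

lemma iMulti_eq_zero {k : ℕ} {z : Fin k → V} (hz : ¬ LinearIndependent ℝ z) :
    ιMulti ℝ k z = 0 :=
  AlternatingMap.map_linearDependent _ _ hz

lemma iMulti_cons {k : ℕ} (x : V) (z : Fin k → V) :
    ιMulti ℝ (k + 1) (Fin.cons x z) = ι ℝ x * ιMulti ℝ k z := by
  have ht : Matrix.vecTail (Fin.cons x z) = z := by
    funext i
    simp [Matrix.vecTail]
  rw [ιMulti_succ_apply, Fin.cons_zero, ht]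

lemma exists_notMem {D Z : Submodule ℝ V}
    (h : finrank ℝ ↥(D ⊓ Z) < finrank ℝ D) : ∃ x ∈ D, x ∉ Z := by
  by_contra hc
  push_neg at hc
  rw [inf_eq_left.mpr hc] at h
  exact lt_irrefl _ h

/-- Key pairwise lemma: if `P + Q` is decomposable, the factor spaces of `P` and `Q`
meet in dimension at least `n - 1`. -/
lemma key {n : ℕ} {p w u : Fin n → V}
    (hp : LinearIndependent ℝ p) (hw : LinearIndependent ℝ w)
    (hR : ιMulti ℝ n p + ιMulti ℝ n w = ιMulti ℝ n u) :
    n - 1 ≤ finrank ℝ ↥(span ℝ (range p) ⊓ span ℝ (range w)) := by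
  rcases Nat.lt_or_ge n 2 with h2 | h2
  · have h : n - 1 = 0 := by omega
    rw [h]; exact Nat.zero_le _
  by_contra hcon
  push_neg at hcon
  set DP := span ℝ (range p) with hDP'
  set DQ := span ℝ (range w) with hDQ'
  have hDP : finrank ℝ DP = n := by
    rw [hDP', finrank_span_eq_card hp, Fintype.card_fin]
  have hDQ : finrank ℝ DQ = n := by
    rw [hDQ', finrank_span_eq_card hw, Fintype.card_fin]
  -- choose x₂ ∈ DP \ DQ
  obtain ⟨x₂, hx₂P, hx₂Q⟩ := exists_notMem (D := DP) (Z := DQ) (by omega)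
  have hx₂ne : x₂ ≠ 0 := fun h => hx₂Q (h ▸ zero_mem _)
  -- choose x₁ ∈ DP \ (DQ ⊔ span {x₂})
  have hmod : DP ⊓ DQ ⊔ span ℝ {x₂} = DP ⊓ (DQ ⊔ span ℝ {x₂}) :=
    inf_sup_assoc_of_le _ (span_le.mpr (by simpa using hx₂P))
  have hrank1 : finrank ℝ ↥(DP ⊓ (DQ ⊔ span ℝ {x₂})) < finrank ℝ DP := by
    rw [← hmod]
    have h1 := Submodule.finrank_add_le_finrank_add_finrank (DP ⊓ DQ) (span ℝ {x₂})
    have h2 : finrank ℝ ↥(span ℝ {x₂}) = 1 := finrank_span_singleton hx₂ne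
    omega
  obtain ⟨x₁, hx₁P, hx₁'⟩ := exists_notMem hrank1
  -- choose y₁ ∈ DQ \ DP
  have hrank2 : finrank ℝ ↥(DQ ⊓ DP) < finrank ℝ DQ := by
    rw [inf_comm]; omega
  obtain ⟨y₁, hy₁Q, hy₁P⟩ := exists_notMem hrank2
  -- independence facts
  have li_x : LinearIndependent ℝ (Fin.cons x₁ (Fin.cons x₂ w) : Fin (n + 1 + 1) → V) := by
    rw [linearIndependent_fin_cons]
    refine ⟨linearIndependent_fin_cons.mpr ⟨hw, hx₂Q⟩, ?_⟩
    intro hmem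
    apply hx₁'
    rw [Fin.range_cons, span_insert] at hmem
    rwa [sup_comm] at hmem
  have li_y : LinearIndependent ℝ (Fin.cons y₁ p : Fin (n + 1) → V) :=
    linearIndependent_fin_cons.mpr ⟨hp, hy₁P⟩
  -- wedge-vanishing helpers
  have e0P : ∀ x ∈ DP, ι ℝ x * ιMulti ℝ n p = 0 := by
    intro x hx
    rw [← iMulti_cons]
    apply iMulti_eq_zero
    intro hli
    exact (linearIndependent_fin_cons.mp hli).2 hx
  have e0Q : ∀ x ∈ DQ, ι ℝ x * ιMulti ℝ n w = 0 := by
    intro x hx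
    rw [← iMulti_cons]
    apply iMulti_eq_zero
    intro hli
    exact (linearIndependent_fin_cons.mp hli).2 hx
  -- E2 : cons y₁ u is independent
  have E2 : ιMulti ℝ (n + 1) (Fin.cons y₁ u) ≠ 0 := by
    rw [iMulti_cons, ← hR, mul_add, e0Q y₁ hy₁Q, add_zero, ← iMulti_cons]
    exact iMulti_ne_zero li_y
  have li_yu : LinearIndependent ℝ (Fin.cons y₁ u : Fin (n + 1) → V) := by
    by_contra h; exact E2 (iMulti_eq_zero h)
  -- E1 : cons x₁ (cons x₂ u) is independent
  have E1 : ιMulti ℝ (n + 1 + 1) (Fin.cons x₁ (Fin.cons x₂ u)) ≠ 0 := by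
    rw [iMulti_cons, iMulti_cons, ← hR, mul_add, e0P x₂ hx₂P, zero_add,
      ← iMulti_cons, ← iMulti_cons]
    exact iMulti_ne_zero li_x
  have li_xu : LinearIndependent ℝ (Fin.cons x₁ (Fin.cons x₂ u) : Fin (n + 1 + 1) → V) := by
    by_contra h; exact E1 (iMulti_eq_zero h)
  obtain ⟨li_x₂u, hx₁u⟩ := linearIndependent_fin_cons.mp li_xu
  have hx₂u : x₂ ∉ span ℝ (range u) := (linearIndependent_fin_cons.mp li_x₂u).2
  -- E3 : for x ∈ DP, cons x (cons y₁ u) is dependent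
  have E3 : ∀ x ∈ DP, ιMulti ℝ (n + 1 + 1) (Fin.cons x (Fin.cons y₁ u)) = 0 := by
    intro x hx
    rw [iMulti_cons, iMulti_cons, ← hR, mul_add, e0Q y₁ hy₁Q, add_zero,
      ← iMulti_cons, ← iMulti_cons]
    apply iMulti_eq_zero
    intro hli
    apply (linearIndependent_fin_cons.mp hli).2
    refine span_mono ?_ hx
    rw [Fin.range_cons]
    exact subset_insert _ _
  have mem_of_E3 : ∀ x ∈ DP, x ∈ span ℝ (insert y₁ (range u)) := by
    intro x hx
    have h3 := E3 x hx
    have hnli : ¬ LinearIndependent ℝ (Fin.cons x (Fin.cons y₁ u) : Fin (n + 1 + 1) → V) :=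
      fun hli => iMulti_ne_zero hli h3
    rw [linearIndependent_fin_cons] at hnli
    push_neg at hnli
    have := hnli li_yu
    rwa [Fin.range_cons] at this
  have mem1 := mem_of_E3 x₁ hx₁P
  have mem2 := mem_of_E3 x₂ hx₂P
  rw [mem_span_insert] at mem1 mem2
  obtain ⟨a, s₁, hs₁, hx₁eq⟩ := mem1
  obtain ⟨b, s₂, hs₂, hx₂eq⟩ := mem2
  have ha : a ≠ 0 := by
    rintro rfl
    apply hx₁u
    rw [Fin.range_cons]
    refine span_mono (subset_insert _ _) ?_
    rw [zero_smul, zero_add] at hx₁eq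
    exact hx₁eq ▸ hs₁
  have hb : b ≠ 0 := by
    rintro rfl
    apply hx₂u
    rw [zero_smul, zero_add] at hx₂eq
    exact hx₂eq ▸ hs₂
  apply hx₁u
  rw [Fin.range_cons, mem_span_insert]
  refine ⟨a * b⁻¹, s₁ - (a * b⁻¹) • s₂, sub_mem hs₁ (smul_mem _ _ hs₂), ?_⟩
  have hab : a * b⁻¹ * b = a := by field_simp
  rw [hx₁eq, hx₂eq, smul_add, smul_smul, hab]
  abel

end Aux

/-- Let `(P_α)_{α ∈ A}` be a family of nonzero decomposable `n`-vectors
`P_α = v_α^1 ∧ … ∧ v_α^n` such that every pairwise sum `P_{α₁} + P_{α₂}` is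
decomposable, and let `D_α` be the subspaces spanned by the factors. Then either
`dim (⋂_α D_α) ≥ n − 1` or `dim (Σ_α D_α) ≤ n + 1`. -/
theorem decomposable_family_intersection_or_sum
    {V : Type*} [AddCommGroup V] [Module ℝ V] [FiniteDimensional ℝ V]
    {A : Type*} (n : ℕ) (v : A → Fin n → V)
    (h0 : ∀ α, wedgeList (v α) ≠ 0)
    (hsum : ∀ α β : A, ∃ u : Fin n → V,
      wedgeList (v α) + wedgeList (v β) = wedgeList u) :
    n - 1 ≤ Module.finrank ℝ ↥(⨅ α : A, Submodule.span ℝ (Set.range (v α))) ∨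
      Module.finrank ℝ ↥(⨆ α : A, Submodule.span ℝ (Set.range (v α))) ≤ n + 1 := by
  classical
  have hwl : ∀ {m : ℕ} (z : Fin m → V), wedgeList z = ιMulti ℝ m z := by
    intro m z; rw [ιMulti_apply]; rfl
  have hw : ∀ α, ιMulti ℝ n (v α) ≠ 0 := by
    intro α; have := h0 α; rwa [hwl] at this
  have hli : ∀ α, LinearIndependent ℝ (v α) := by
    intro α; by_contra h; exact hw α (iMulti_eq_zero h)
  set D : A → Submodule ℝ V := fun α => span ℝ (range (v α)) with hDdef
  change n - 1 ≤ finrank ℝ ↥(⨅ α, D α) ∨ finrank ℝ ↥(⨆ α, D α) ≤ n + 1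
  have hDrank : ∀ α, finrank ℝ (D α) = n := by
    intro α
    rw [hDdef]
    rw [finrank_span_eq_card (hli α), Fintype.card_fin]
  have hpair : ∀ α β, n - 1 ≤ finrank ℝ ↥(D α ⊓ D β) := by
    intro α β
    obtain ⟨u, hu⟩ := hsum α β
    rw [hwl, hwl, hwl] at hu
    exact key (hli α) (hli β) hu
  rcases Nat.lt_or_ge n 2 with hn | hn
  · left
    have h : n - 1 = 0 := by omega
    rw [h]; exact Nat.zero_le _
  cases isEmpty_or_nonempty A with
  | inl h =>
    right
    rw [iSup_of_empty]
    rw [finrank_bot]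
    exact Nat.zero_le _
  | inr h =>
    obtain ⟨α₀⟩ := h
    by_cases hall : ∀ γ, D γ = D α₀
    · left
      have heq : (⨅ γ, D γ) = D α₀ :=
        le_antisymm (iInf_le _ α₀) (le_iInf fun γ => (hall γ).ge)
      rw [heq, hDrank]
      omega
    push_neg at hall
    obtain ⟨β₀, hβ₀⟩ := hall
    set W := D β₀ ⊓ D α₀ with hW'
    set S := D β₀ ⊔ D α₀ with hS'
    have hrank_inf : ∀ γ δ, D γ ≠ D δ → finrank ℝ ↥(D γ ⊓ D δ) = n - 1 := by
      intro γ δ hne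
      have h1 := hpair γ δ
      have h2 : finrank ℝ ↥(D γ ⊓ D δ) ≤ n :=
        (Submodule.finrank_mono inf_le_left).trans (le_of_eq (hDrank γ))
      rcases eq_or_lt_of_le h2 with he | hl
      · exfalso
        have he1 : D γ ⊓ D δ = D γ :=
          Submodule.eq_of_le_of_finrank_eq inf_le_left (by rw [he, hDrank])
        have hle : D γ ≤ D δ := he1 ▸ inf_le_right
        exact hne (Submodule.eq_of_le_of_finrank_eq hle (by rw [hDrank, hDrank]))
      · omega
    have hWrank : finrank ℝ W = n - 1 := hrank_inf β₀ α₀ hβ₀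
    have hSrank : finrank ℝ S = n + 1 := by
      have hh := Submodule.finrank_sup_add_finrank_inf_eq (D β₀) (D α₀)
      rw [hDrank, hDrank] at hh
      rw [← hW'] at hh
      rw [hS'] at *
      omega
    have dich : ∀ γ, W ≤ D γ ∨ D γ ≤ S := by
      intro γ
      by_cases hgα : D γ = D α₀
      · left; rw [hgα, hW']; exact inf_le_right
      by_cases hgβ : D γ = D β₀
      · left; rw [hgβ, hW']; exact inf_le_left
      have r1 := hrank_inf γ α₀ hgα
      have r2 := hrank_inf γ β₀ hgβ
      by_cases hWW : D γ ⊓ D α₀ = D γ ⊓ D β₀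
      · left
        have hle : D γ ⊓ D α₀ ≤ W := by
          rw [hW']
          exact le_inf (by rw [hWW]; exact inf_le_right) inf_le_right
        have heq : D γ ⊓ D α₀ = W :=
          Submodule.eq_of_le_of_finrank_eq hle (by rw [r1, hWrank])
        rw [← heq]
        exact inf_le_left
      · right
        set T := (D γ ⊓ D α₀) ⊔ (D γ ⊓ D β₀) with hT'
        have hTle : T ≤ D γ := sup_le inf_le_left inf_le_left
        have hT1 : n - 1 ≤ finrank ℝ T := r1 ▸ Submodule.finrank_mono le_sup_left
        have hTne : finrank ℝ T ≠ n - 1 := by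
          intro he
          have e1 : D γ ⊓ D α₀ = T :=
            Submodule.eq_of_le_of_finrank_eq le_sup_left (by rw [r1, he])
          have e2 : D γ ⊓ D β₀ = T :=
            Submodule.eq_of_le_of_finrank_eq le_sup_right (by rw [r2, he])
          exact hWW (e1.trans e2.symm)
        have hT2 : finrank ℝ T ≤ n := (Submodule.finrank_mono hTle).trans (le_of_eq (hDrank γ))
        have hTr : finrank ℝ T = n := by omega
        have hTeq : T = D γ :=
          Submodule.eq_of_le_of_finrank_eq hTle (by rw [hTr, hDrank])
        rw [← hTeq, hS']
        exact sup_le (inf_le_right.trans le_sup_right) (inf_le_right.trans le_sup_left)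
    by_cases hWall : ∀ γ, W ≤ D γ
    · left
      have hle : W ≤ ⨅ γ, D γ := le_iInf hWall
      calc n - 1 = finrank ℝ W := hWrank.symm
        _ ≤ _ := Submodule.finrank_mono hle
    · right
      push_neg at hWall
      obtain ⟨γ₀, hγ₀⟩ := hWall
      have hγ₀S : D γ₀ ≤ S := (dich γ₀).resolve_left hγ₀
      have hallS : ∀ γ, D γ ≤ S := by
        intro γ
        rcases dich γ with hw' | hs'
        · by_contra hns
          have hWS : W ≤ D γ ⊓ S := le_inf hw' (by rw [hW', hS']; exact inf_le_left.trans le_sup_left)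
          have hne : finrank ℝ ↥(D γ ⊓ S) ≠ n := by
            intro he
            apply hns
            have heq : D γ ⊓ S = D γ :=
              Submodule.eq_of_le_of_finrank_eq inf_le_left (by rw [he, hDrank])
            exact heq ▸ inf_le_right
          have hle : finrank ℝ ↥(D γ ⊓ S) ≤ n :=
            (Submodule.finrank_mono inf_le_left).trans (le_of_eq (hDrank γ))
          have hge : n - 1 ≤ finrank ℝ ↥(D γ ⊓ S) := hWrank ▸ Submodule.finrank_mono hWS
          have heq' : finrank ℝ ↥(D γ ⊓ S) = n - 1 := by omega
          have hWeq : W = D γ ⊓ S :=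
            Submodule.eq_of_le_of_finrank_eq hWS (by rw [hWrank, heq'])
          have h1 : D γ ⊓ D γ₀ ≤ W := by
            rw [hWeq]
            exact le_inf inf_le_left (inf_le_right.trans hγ₀S)
          have h2 : finrank ℝ ↥(D γ ⊓ D γ₀) = n - 1 :=
            le_antisymm (hWrank ▸ Submodule.finrank_mono h1) (hpair γ γ₀)
          have h3 : D γ ⊓ D γ₀ = W :=
            Submodule.eq_of_le_of_finrank_eq h1 (by rw [h2, hWrank])
          exact hγ₀ (h3 ▸ inf_le_right)
        · exact hs'
      have hle : (⨆ γ, D γ) ≤ S := iSup_le hallS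
      calc finrank ℝ ↥(⨆ γ, D γ) ≤ finrank ℝ S := Submodule.finrank_mono hle
        _ = n + 1 := hSrank
end
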